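/- arXiv:2603.02095 — 18 statements merged into one kernel-verified Lean document; each statement's English description precedes it below -/
import Mathlib

section
/- A parameter vector θ = (w1, b1, w2, b2) ∈ ℝ^4 satisfies the KKT conditions of the max-margin problem min (1/2)‖θ‖² subject to −Φ(θ; −1) ≥ 1 and Φ(θ; 1) ≥ 1 — namely, there exist λ1, λ2 ≥ 0 and subgradient values g11, g21, g12, g22 ∈ [0,1] such that (for i, j ∈ {1,2}, with x1 = −1 and x2 = 1) gij = 0 whenever wj*xi + bj < 0 and gij = 1 whenever wj*xi + bj > 0, and w1 = λ1*g11 + λ2*g21, b1 = −λ1*g11 + λ2*g21, w2 = −λ1*g12 − λ2*g22, b2 = λ1*g12 − λ2*g22, −Φ(θ; −1) ≥ 1, Φ(θ; 1) ≥ 1, λ1 = 0 whenever −Φ(θ; −1) ≠ 1, and λ2 = 0 whenever Φ(θ; 1) ≠ 1 — if and only if θ = (1/2, 1/2, −1/2, 1/2). -/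
set_option maxHeartbeats 2000000 in
/-- KKT conditions of the max-margin problem for the two-neuron
ReLU network `Φ(θ;x) = max 0 (w1*x+b1) - max 0 (w2*x+b2)` with training set
`(-1,-1)`, `(1,1)` hold iff `θ = (1/2, 1/2, -1/2, 1/2)`. -/
theorem stmt_0 (w1 b1 w2 b2 : ℝ) :
    (∃ l1 l2 g11 g21 g12 g22 : ℝ,
      0 ≤ l1 ∧ 0 ≤ l2 ∧
      g11 ∈ Set.Icc (0:ℝ) 1 ∧ g21 ∈ Set.Icc (0:ℝ) 1 ∧
      g12 ∈ Set.Icc (0:ℝ) 1 ∧ g22 ∈ Set.Icc (0:ℝ) 1 ∧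
      (w1 * (-1) + b1 < 0 → g11 = 0) ∧ (0 < w1 * (-1) + b1 → g11 = 1) ∧
      (w1 * 1 + b1 < 0 → g21 = 0) ∧ (0 < w1 * 1 + b1 → g21 = 1) ∧
      (w2 * (-1) + b2 < 0 → g12 = 0) ∧ (0 < w2 * (-1) + b2 → g12 = 1) ∧
      (w2 * 1 + b2 < 0 → g22 = 0) ∧ (0 < w2 * 1 + b2 → g22 = 1) ∧
      w1 = l1 * g11 + l2 * g21 ∧
      b1 = -l1 * g11 + l2 * g21 ∧
      w2 = -l1 * g12 - l2 * g22 ∧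
      b2 = l1 * g12 - l2 * g22 ∧
      -(max 0 (w1 * (-1) + b1) - max 0 (w2 * (-1) + b2)) ≥ 1 ∧
      (max 0 (w1 * 1 + b1) - max 0 (w2 * 1 + b2)) ≥ 1 ∧
      (-(max 0 (w1 * (-1) + b1) - max 0 (w2 * (-1) + b2)) ≠ 1 → l1 = 0) ∧
      ((max 0 (w1 * 1 + b1) - max 0 (w2 * 1 + b2)) ≠ 1 → l2 = 0))
    ↔ (w1 = 1/2 ∧ b1 = 1/2 ∧ w2 = -1/2 ∧ b2 = 1/2) := by
  constructor
  · rintro ⟨l1, l2, g11, g21, g12, g22, hl1, hl2, ⟨hg11a, hg11b⟩, ⟨hg21a, hg21b⟩,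
      ⟨hg12a, hg12b⟩, ⟨hg22a, hg22b⟩, s11n, s11p, s21n, s21p, s12n, s12p, s22n, s22p,
      e1, e2, e3, e4, c1, c2, cs1, cs2⟩
    -- activation signs
    have ha1 : w1 * (-1) + b1 ≤ 0 := by nlinarith
    have hc2 : w2 * 1 + b2 ≤ 0 := by nlinarith
    have hmax1 : max 0 (w1 * (-1) + b1) = 0 := max_eq_left ha1
    have hmax2 : max 0 (w2 * 1 + b2) = 0 := max_eq_left hc2
    rw [hmax1] at c1 cs1
    rw [hmax2] at c2 cs2
    simp only [sub_zero, neg_sub, zero_sub, neg_neg] at c1 cs1 c2 cs2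
    -- margins: max 0 t ≥ 1 → t ≥ 1
    have h1 : w2 * (-1) + b2 ≥ 1 := by
      by_contra h
      push_neg at h
      have : max 0 (w2 * (-1) + b2) < 1 := max_lt one_pos h
      linarith
    have h2 : w1 * 1 + b1 ≥ 1 := by
      by_contra h
      push_neg at h
      have : max 0 (w1 * 1 + b1) < 1 := max_lt one_pos h
      linarith
    have hm1 : max 0 (w2 * (-1) + b2) = w2 * (-1) + b2 := max_eq_right (by linarith)
    have hm2 : max 0 (w1 * 1 + b1) = w1 * 1 + b1 := max_eq_right (by linarith)
    rw [hm1] at cs1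
    rw [hm2] at cs2
    have hg21 : g21 = 1 := s21p (by linarith)
    have hg12 : g12 = 1 := s12p (by linarith)
    subst hg21 hg12
    -- complementary slackness forces l1 = l2 = 1/2
    have hl1' : l1 = 1/2 := by
      by_contra h
      have := cs1 (by intro hc; apply h; nlinarith)
      nlinarith
    have hl2' : l2 = 1/2 := by
      by_contra h
      have := cs2 (by intro hc; apply h; nlinarith)
      nlinarith
    subst hl1' hl2'
    -- g11 = 0 and g22 = 0
    have hg11 : g11 = 0 := by
      by_contra h
      have hpos : 0 < g11 := lt_of_le_of_ne hg11a (Ne.symm h)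
      exact h (s11n (by nlinarith))
    have hg22 : g22 = 0 := by
      by_contra h
      have hpos : 0 < g22 := lt_of_le_of_ne hg22a (Ne.symm h)
      exact h (s22n (by nlinarith))
    subst hg11 hg22
    refine ⟨by linarith, by linarith, by linarith, by linarith⟩
  · rintro ⟨hw1, hb1, hw2, hb2⟩
    subst hw1 hb1 hw2 hb2
    exact ⟨1/2, 1/2, 0, 1, 1, 0, by norm_num [Set.mem_Icc]⟩
end

section
/- Suppose w1 > 0, −b1/w1 ∈ (−1, 1), and let x > 0, w1' = w1 + x, b1' = b1 + x. Then w1' > 0 and −b1'/w1' ∈ (−1, −b1/w1). Likewise, suppose w2 < 0, −b2/w2 ∈ (−1, 1), and let x > 0, w2' = w2 − x, b2' = b2 + x. Then w2' < 0 and −b2'/w2' ∈ (−b2/w2, 1). -/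
/-- monotone motion of the breakpoints under the specialized
gradient descent update of each neuron. -/
theorem stmt_1 :
    (∀ w1 b1 x : ℝ, 0 < w1 → -b1 / w1 ∈ Set.Ioo (-1 : ℝ) 1 → 0 < x →
      0 < w1 + x ∧ -(b1 + x) / (w1 + x) ∈ Set.Ioo (-1 : ℝ) (-b1 / w1)) ∧
    (∀ w2 b2 x : ℝ, w2 < 0 → -b2 / w2 ∈ Set.Ioo (-1 : ℝ) 1 → 0 < x →
      w2 - x < 0 ∧ -(b2 + x) / (w2 - x) ∈ Set.Ioo (-b2 / w2) 1) := by
  constructor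
  · intro w1 b1 x hw ⟨h1, h2⟩ hx
    have hw' : 0 < w1 + x := by linarith
    have hb1 : -w1 < -b1 := by
      have := (div_lt_iff₀ hw).mp h2  -- -b1/w1 < 1 → -b1 < w1... direction
      nlinarith [(lt_div_iff₀ hw).mp h1]
    have hb2 : -b1 < w1 := by nlinarith [(div_lt_iff₀ hw).mp h2]
    refine ⟨hw', ?_, ?_⟩
    · rw [lt_div_iff₀ hw']; nlinarith
    · rw [div_lt_div_iff₀ hw' hw]; nlinarith
  · intro w2 b2 x hw ⟨h1, h2⟩ hx
    have hw' : w2 - x < 0 := by linarith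
    have hb1 : w2 < -b2 := by nlinarith [(div_lt_iff_of_neg hw).mp h2]
    have hb2 : -b2 < -w2 := by nlinarith [(lt_div_iff_of_neg hw).mp h1]
    refine ⟨hw', ?_, ?_⟩
    · rw [lt_div_iff_of_neg hw', div_mul_eq_mul_div, lt_div_iff_of_neg hw]; nlinarith
    · rw [div_lt_iff_of_neg hw']; nlinarith
end

section
/- Let θ = (w1, b1, w2, b2) ∈ ℝ^4 and suppose at least one of the following conditions holds: (i) w1 > 0 and −b1/w1 ≥ 1; (ii) w2 < 0 and −b2/w2 ≤ −1; (iii) w1 < 0 and −b1/w1 ≤ 1; (iv) w2 > 0 and −b2/w2 ≥ −1; (v) w1 ≤ 0 and w2 ≥ 0; (vi) w1 = 0 and b1 ≤ 0; (vii) w2 = 0 and b2 ≤ 0. Then L(θ) ≥ 1/2. -/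
lemma key (A B : ℝ) (h : 0 ≤ A ∨ B ≤ 0 ∨ B ≤ A) :
    (1/2) * Real.exp A + (1/2) * Real.exp (-B) ≥ 1/2 := by
  rcases h with h | h | h
  · have h1 : (1:ℝ) ≤ Real.exp A := Real.one_le_exp h
    have h2 : 0 < Real.exp (-B) := Real.exp_pos _
    nlinarith
  · have h1 : (1:ℝ) ≤ Real.exp (-B) := Real.one_le_exp (by linarith)
    have h2 : 0 < Real.exp A := Real.exp_pos _
    nlinarith
  · have h1 : Real.exp (-A) ≤ Real.exp (-B) := Real.exp_le_exp.2 (by linarith)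
    have h2 : A + 1 ≤ Real.exp A := Real.add_one_le_exp A
    have h3 : -A + 1 ≤ Real.exp (-A) := Real.add_one_le_exp (-A)
    nlinarith

/-- under any of the listed sign/breakpoint configurations, the
training loss of the two-neuron ReLU network on the dataset
`(-1,-1), (1,1)` is at least `1/2`. -/
theorem stmt_2 (w1 b1 w2 b2 : ℝ)
    (h : (0 < w1 ∧ -b1 / w1 ≥ 1) ∨ (w2 < 0 ∧ -b2 / w2 ≤ -1) ∨
         (w1 < 0 ∧ -b1 / w1 ≤ 1) ∨ (0 < w2 ∧ -b2 / w2 ≥ -1) ∨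
         (w1 ≤ 0 ∧ 0 ≤ w2) ∨ (w1 = 0 ∧ b1 ≤ 0) ∨ (w2 = 0 ∧ b2 ≤ 0)) :
    (1/2) * Real.exp (max 0 (w1 * (-1) + b1) - max 0 (w2 * (-1) + b2))
      + (1/2) * Real.exp (-(max 0 (w1 * 1 + b1) - max 0 (w2 * 1 + b2))) ≥ 1/2 := by
  apply key
  rcases h with ⟨hw, hb⟩ | ⟨hw, hb⟩ | ⟨hw, hb⟩ | ⟨hw, hb⟩ | ⟨h1, h2⟩ | ⟨hw, hb⟩ | ⟨hw, hb⟩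
  · -- w1 > 0, -b1/w1 ≥ 1 ⇒ w1 + b1 ≤ 0 ⇒ B ≤ 0
    right; left
    have hb' : w1 * 1 + b1 ≤ 0 := by
      have := (le_div_iff₀ hw).mp hb; linarith
    rw [max_eq_left hb']
    have := le_max_left 0 (w2 * 1 + b2)
    linarith
  · -- w2 < 0, -b2/w2 ≤ -1 ⇒ b2 - w2 ≤ 0 ⇒ A ≥ 0
    left
    have hb' : w2 * (-1) + b2 ≤ 0 := by
      have := (div_le_iff_of_neg hw).mp hb; linarith
    rw [max_eq_left hb']
    have := le_max_left 0 (w1 * (-1) + b1)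
    linarith
  · -- w1 < 0, -b1/w1 ≤ 1 ⇒ w1 + b1 ≤ 0 ⇒ B ≤ 0
    right; left
    have hb' : w1 * 1 + b1 ≤ 0 := by
      have := (div_le_iff_of_neg hw).mp hb; linarith
    rw [max_eq_left hb']
    have := le_max_left 0 (w2 * 1 + b2)
    linarith
  · -- w2 > 0, -b2/w2 ≥ -1 ⇒ b2 - w2 ≤ 0 ⇒ A ≥ 0
    left
    have hb' : w2 * (-1) + b2 ≤ 0 := by
      have := (le_div_iff₀ hw).mp hb; linarith
    rw [max_eq_left hb']
    have := le_max_left 0 (w1 * (-1) + b1)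
    linarith
  · -- w1 ≤ 0, w2 ≥ 0 ⇒ B ≤ A
    right; right
    have hA1 : max 0 (w1 * 1 + b1) ≤ max 0 (w1 * (-1) + b1) :=
      max_le_max le_rfl (by linarith)
    have hA2 : max 0 (w2 * (-1) + b2) ≤ max 0 (w2 * 1 + b2) :=
      max_le_max le_rfl (by linarith)
    linarith
  · -- w1 = 0, b1 ≤ 0 ⇒ B ≤ 0
    right; left
    have hb' : w1 * 1 + b1 ≤ 0 := by rw [hw]; linarith
    rw [max_eq_left hb']
    have := le_max_left 0 (w2 * 1 + b2)
    linarith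
  · -- w2 = 0, b2 ≤ 0 ⇒ A ≥ 0
    left
    have hb' : w2 * (-1) + b2 ≤ 0 := by rw [hw]; linarith
    rw [max_eq_left hb']
    have := le_max_left 0 (w1 * (-1) + b1)
    linarith
end

section
/- Let C1 > 0 and C2 > 0, and let (a_t) be a real sequence satisfying a_{t+1} = a_t + C1*exp(−C2*a_t) for all t ≥ 0. Then for all t ≥ 0: (1/C2)*ln(exp(C2*a_0) + t*C2*C1) ≤ a_t ≤ (1/C2)*ln(exp(C2*a_0) + t*C2*C1*exp(C2*C1*exp(−C2*a_0))). -/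
/-!
Substituting `b t = exp (C2 * a t)` turns the recursion into `b (t+1) = b t * exp (K / b t)`
with `K = C2 * C1`. Since `1 + y ≤ exp y ≤ 1 + y * exp y`, each step increases `b` by at least
`K` and by at most `K * exp (K / b t) ≤ K * exp (K / b 0)`; summing and taking logarithms gives
the bounds.
-/

open Real

theorem Real.exp_le_one_add_mul_exp (x : ℝ) : exp x ≤ 1 + x * exp x := by
  have h := mul_le_mul_of_nonneg_left (one_sub_le_exp_neg x) (exp_pos x).le
  rw [← exp_add, add_neg_cancel, exp_zero] at h
  linarith

theorem add_le_mul_exp_div (K : ℝ) {b : ℝ} (hb : 0 < b) : b + K ≤ b * exp (K / b) :=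
  calc b + K = b * (K / b + 1) := by field_simp; ring
    _ ≤ b * exp (K / b) := mul_le_mul_of_nonneg_left (add_one_le_exp _) hb.le

theorem mul_exp_div_le (K : ℝ) {b : ℝ} (hb : 0 < b) : b * exp (K / b) ≤ b + K * exp (K / b) :=
  calc b * exp (K / b) ≤ b * (1 + K / b * exp (K / b)) :=
        mul_le_mul_of_nonneg_left (exp_le_one_add_mul_exp _) hb.le
    _ = b + K * exp (K / b) := by field_simp

namespace MulExpRecurrence

variable {b : ℕ → ℝ} {K : ℝ}

theorem add_mul_le (hK : 0 ≤ K) (hb0 : 0 < b 0) (hb : ∀ t, b (t + 1) = b t * exp (K / b t))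
    (t : ℕ) : b 0 + t * K ≤ b t := by
  induction t with
  | zero => simp
  | succ n ih =>
    have hbn : 0 < b n := hb0.trans_le ((le_add_of_nonneg_right (by positivity)).trans ih)
    calc b 0 + (n + 1 : ℕ) * K = b 0 + n * K + K := by push_cast; ring
      _ ≤ b n + K := by gcongr
      _ ≤ b (n + 1) := hb n ▸ add_le_mul_exp_div K hbn

theorem le_add_mul_exp (hK : 0 ≤ K) (hb0 : 0 < b 0) (hb : ∀ t, b (t + 1) = b t * exp (K / b t))
    (t : ℕ) : b t ≤ b 0 + t * K * exp (K / b 0) := by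
  induction t with
  | zero => simp
  | succ n ih =>
    have hb0n : b 0 ≤ b n :=
      (le_add_of_nonneg_right (by positivity)).trans (add_mul_le hK hb0 hb n)
    have hbn : 0 < b n := hb0.trans_le hb0n
    calc b (n + 1) ≤ b n + K * exp (K / b n) := hb n ▸ mul_exp_div_le K hbn
      _ ≤ b 0 + n * K * exp (K / b 0) + K * exp (K / b 0) := by gcongr
      _ = b 0 + (n + 1 : ℕ) * K * exp (K / b 0) := by push_cast; ring

end MulExpRecurrence

/-- growth bounds for the recursion `a_{t+1} = a_t + C1 exp(-C2 a_t)`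
with `C1 > 0`. -/
theorem stmt_3 (C1 C2 : ℝ) (hC1 : 0 < C1) (hC2 : 0 < C2) (a : ℕ → ℝ)
    (ha : ∀ t : ℕ, a (t+1) = a t + C1 * Real.exp (-C2 * a t)) :
    ∀ t : ℕ,
      (1/C2) * Real.log (Real.exp (C2 * a 0) + t * C2 * C1) ≤ a t ∧
      a t ≤ (1/C2) * Real.log (Real.exp (C2 * a 0) +
        t * C2 * C1 * Real.exp (C2 * C1 * Real.exp (-C2 * a 0))) := by
  set b : ℕ → ℝ := fun t ↦ exp (C2 * a t)
  have hexp_neg (t : ℕ) : exp (-C2 * a t) = 1 / b t := by simp [b, neg_mul, exp_neg]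
  have hb (t : ℕ) : b (t + 1) = b t * exp (C2 * C1 / b t) := by
    simp only [b, ha t, hexp_neg, ← exp_add]
    congr 1
    ring
  have hK : 0 ≤ C2 * C1 := by positivity
  intro t
  have hlower := MulExpRecurrence.add_mul_le hK (exp_pos _) hb t
  have hupper := MulExpRecurrence.le_add_mul_exp hK (exp_pos _) hb t
  rw [one_div_mul_eq_div, one_div_mul_eq_div, div_le_iff₀' hC2, le_div_iff₀' hC2,
    log_le_iff_le_exp (by positivity), le_log_iff_exp_le (by positivity), hexp_neg,
    ← div_eq_mul_one_div]
  simp only [b, mul_assoc] at hlower hupper ⊢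
  exact ⟨hlower, hupper⟩
end

section
/- Let η > 0 and suppose the initialization θ^(0) = (w1^(0), b1^(0), w2^(0), b2^(0)) satisfies w1^(0) > 0, w2^(0) < 0, and both breakpoints β1^(0) = −b1^(0)/w1^(0) and β2^(0) = −b2^(0)/w2^(0) lie in (−1, 1). Define the gradient descent iterates θ^(t+1) = θ^(t) − η*∇L(θ^(t)). Then L is differentiable at every iterate, the sequences w1^(t), b1^(t), b2^(t) are strictly increasing, w2^(t) is strictly decreasing (so the signs of w1^(t) and w2^(t) never change), and for all t: β1^(t+1) ∈ (−1, β1^(t)) and β2^(t+1) ∈ (β2^(t), 1). -/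
/-- The two-neuron ReLU network: `θ = (w1, b1, w2, b2)`. -/
noncomputable def Phi (θ : EuclideanSpace ℝ (Fin 4)) (x : ℝ) : ℝ :=
  max 0 (θ 0 * x + θ 1) - max 0 (θ 2 * x + θ 3)

/-- The training loss on `(x1,y1) = (-1,-1)`, `(x2,y2) = (1,1)` under the
exponential loss. -/
noncomputable def Loss (θ : EuclideanSpace ℝ (Fin 4)) : ℝ :=
  (1/2) * Real.exp (Phi θ (-1)) + (1/2) * Real.exp (-(Phi θ 1))

/-!
Call a parameter *active* when neuron 1 fires at `x = 1` but not at `x = -1` and neuron 2 fires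
at `x = -1` but not at `x = 1`; for `w1 > 0 > w2` this says exactly that both breakpoints lie in
`(-1, 1)`. On this open set `L(θ) = (e^{w2 - b2} + e^{-(w1 + b1)}) / 2` is smooth with gradient
`(-A, -A, B, -B)`, `A, B > 0`, so a gradient step adds `(a, a, -b, b)` with `a, b > 0`. Such a
step preserves `b1 < w1` and `b2 < -w2`, increases `w1 + b1` and leaves `w2 + b2` unchanged, so the
parameter stays active forever. The new breakpoint `-(b1 + a) / (w1 + a)` is a mediant of
`-b1 / w1` and `-a / a = -1`, hence lies strictly between them; symmetrically for neuron 2.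
-/

open Real Set

namespace TwoNeuronReLU

local notation "E" => EuclideanSpace ℝ (Fin 4)

def activeRegion : Set E :=
  {p | p 1 < p 0 ∧ 0 < p 0 + p 1 ∧ p 2 < p 3 ∧ p 2 + p 3 < 0}

lemma isOpen_activeRegion : IsOpen activeRegion := by
  have hc (i : Fin 4) : Continuous fun p : E => p i := (EuclideanSpace.proj i).continuous
  exact (isOpen_lt (hc 1) (hc 0)).inter <| (isOpen_lt continuous_const ((hc 0).add (hc 1))).inter <|
    (isOpen_lt (hc 2) (hc 3)).inter (isOpen_lt ((hc 2).add (hc 3)) continuous_const)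

lemma mem_activeRegion_of_breakpoints {p : E} (hw1 : 0 < p 0) (hw2 : p 2 < 0)
    (hβ1 : -p 1 / p 0 ∈ Ioo (-1 : ℝ) 1) (hβ2 : -p 3 / p 2 ∈ Ioo (-1 : ℝ) 1) :
    p ∈ activeRegion := by
  obtain ⟨h1, h2⟩ := hβ1
  obtain ⟨h3, h4⟩ := hβ2
  rw [lt_div_iff₀ hw1] at h1
  rw [div_lt_iff₀ hw1] at h2
  rw [lt_div_iff_of_neg hw2] at h3
  rw [div_lt_iff_of_neg hw2] at h4
  exact ⟨by linarith, by linarith, by linarith, by linarith⟩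

lemma pos_and_neg_of_mem_activeRegion {p : E} (hp : p ∈ activeRegion) : 0 < p 0 ∧ p 2 < 0 := by
  obtain ⟨h1, h2, h3, h4⟩ := hp
  exact ⟨by linarith, by linarith⟩

lemma loss_eqOn_activeRegion :
    EqOn Loss (fun p : E => (1/2) * exp (p 2 - p 3) + (1/2) * exp (-(p 0 + p 1))) activeRegion := by
  rintro p ⟨h1, h2, h3, h4⟩
  have e1 : p 0 * (-1) + p 1 ≤ 0 := by linarith
  have e2 : 0 ≤ p 2 * (-1) + p 3 := by linarith
  have e3 : 0 ≤ p 0 * 1 + p 1 := by linarith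
  have e4 : p 2 * 1 + p 3 ≤ 0 := by linarith
  simp only [Loss, Phi, max_eq_left e1, max_eq_right e2, max_eq_right e3, max_eq_left e4]
  ring_nf

noncomputable def lossGrad (p : E) : E :=
  !₂[-(exp (-(p 0 + p 1)) / 2), -(exp (-(p 0 + p 1)) / 2), exp (p 2 - p 3) / 2,
    -(exp (p 2 - p 3) / 2)]

lemma hasGradientAt_loss {p : E} (hp : p ∈ activeRegion) : HasGradientAt Loss (lossGrad p) p := by
  let pr (i : Fin 4) : E →L[ℝ] ℝ := EuclideanSpace.proj i
  have hsmooth : HasFDerivAt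
      (fun p : E => (1/2) * exp (p 2 - p 3) + (1/2) * exp (-(p 0 + p 1)))
      ((1/2 : ℝ) • (exp (p 2 - p 3) • (pr 2 - pr 3)) +
        (1/2 : ℝ) • (exp (-(p 0 + p 1)) • -(pr 0 + pr 1))) p :=
    (((pr 2).hasFDerivAt.sub (pr 3).hasFDerivAt).exp.const_mul _).add
      ((((pr 0).hasFDerivAt.add (pr 1).hasFDerivAt).neg).exp.const_mul _)
  rw [hasGradientAt_iff_hasFDerivAt]
  refine (hsmooth.congr_of_eventuallyEq
    (loss_eqOn_activeRegion.eventuallyEq_of_mem (isOpen_activeRegion.mem_nhds hp))).congr_fderiv ?_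
  ext v
  simp only [one_div, Fin.isValue, neg_add_rev, smul_add, smul_neg, add_apply,
    smul_apply, sub_apply, PiLp.proj_apply, smul_eq_mul,
    neg_apply, lossGrad, InnerProductSpace.toDual_apply_apply, PiLp.inner_apply,
    RCLike.inner_apply, conj_trivial, Fin.sum_univ_four, Matrix.cons_val_zero, mul_neg,
    Matrix.cons_val_one, Matrix.cons_val, pr]
  ring

def IsActiveStep (p q : E) : Prop :=
  ∃ a b : ℝ, 0 < a ∧ 0 < b ∧ q 0 = p 0 + a ∧ q 1 = p 1 + a ∧ q 2 = p 2 - b ∧ q 3 = p 3 + b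

lemma isActiveStep_gradientStep {η : ℝ} (hη : 0 < η) {p : E} (hp : p ∈ activeRegion) :
    IsActiveStep p (p - η • gradient Loss p) := by
  refine ⟨η * (exp (-(p 0 + p 1)) / 2), η * (exp (p 2 - p 3) / 2), by positivity, by positivity,
    ?_, ?_, ?_, ?_⟩ <;>
  simp [(hasGradientAt_loss hp).gradient, lossGrad]

lemma IsActiveStep.mem_activeRegion {p q : E} (h : IsActiveStep p q) (hp : p ∈ activeRegion) :
    q ∈ activeRegion := by
  obtain ⟨a, b, ha, hb, h0, h1, h2, h3⟩ := h
  obtain ⟨hp1, hp2, hp3, hp4⟩ := hp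
  refine ⟨?_, ?_, ?_, ?_⟩ <;> linarith

lemma neg_add_div_add_mem_Ioo {w b a : ℝ} (hw : 0 < w) (hbw : b < w) (ha : 0 < a) :
    -(b + a) / (w + a) ∈ Ioo (-1) (-b / w) := by
  have hwa : 0 < w + a := by linarith
  constructor
  · rw [lt_div_iff₀ hwa]; linarith
  · rw [div_lt_div_iff₀ hwa hw]; nlinarith

lemma neg_add_div_sub_mem_Ioo {w b a : ℝ} (hw : w < 0) (hbw : b < -w) (ha : 0 < a) :
    -(b + a) / (w - a) ∈ Ioo (-b / w) 1 := by
  have hwa : w - a < 0 := by linarith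
  constructor
  · rw [← neg_div_neg_eq (-b), ← neg_div_neg_eq (-(b + a)),
      div_lt_div_iff₀ (by linarith) (by linarith)]
    nlinarith
  · rw [div_lt_iff_of_neg hwa]; linarith

end TwoNeuronReLU

open TwoNeuronReLU in
/-- invariance of the activation pattern and monotonicity of the
parameters and breakpoints along the gradient descent trajectory, starting from
an initialization with `w1 > 0 > w2` and both breakpoints in `(-1,1)`. -/
theorem stmt_5 (η : ℝ) (hη : 0 < η) (θ : ℕ → EuclideanSpace ℝ (Fin 4))
    (hw1 : 0 < θ 0 0) (hw2 : θ 0 2 < 0)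
    (hβ1 : -(θ 0 1) / (θ 0 0) ∈ Set.Ioo (-1:ℝ) 1)
    (hβ2 : -(θ 0 3) / (θ 0 2) ∈ Set.Ioo (-1:ℝ) 1)
    (hstep : ∀ t : ℕ, θ (t+1) = θ t - η • gradient Loss (θ t)) :
    (∀ t : ℕ, DifferentiableAt ℝ Loss (θ t)) ∧
    StrictMono (fun t : ℕ => θ t 0) ∧
    StrictMono (fun t : ℕ => θ t 1) ∧
    StrictMono (fun t : ℕ => θ t 3) ∧
    StrictAnti (fun t : ℕ => θ t 2) ∧
    (∀ t : ℕ, 0 < θ t 0 ∧ θ t 2 < 0) ∧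
    (∀ t : ℕ, -(θ (t+1) 1) / (θ (t+1) 0) ∈ Set.Ioo (-1:ℝ) (-(θ t 1) / (θ t 0))) ∧
    (∀ t : ℕ, -(θ (t+1) 3) / (θ (t+1) 2) ∈ Set.Ioo (-(θ t 3) / (θ t 2)) (1:ℝ)) := by
  have hR : ∀ t, θ t ∈ activeRegion := by
    intro t
    induction t with
    | zero => exact mem_activeRegion_of_breakpoints hw1 hw2 hβ1 hβ2
    | succ t ih => exact hstep t ▸ (isActiveStep_gradientStep hη ih).mem_activeRegion ih
  have hS (t : ℕ) : IsActiveStep (θ t) (θ (t+1)) := hstep t ▸ isActiveStep_gradientStep hη (hR t)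
  refine ⟨fun t => (hasGradientAt_loss (hR t)).differentiableAt, ?_, ?_, ?_, ?_,
    fun t => pos_and_neg_of_mem_activeRegion (hR t), fun t => ?_, fun t => ?_⟩
  · refine strictMono_nat_of_lt_succ fun t => ?_
    obtain ⟨a, b, ha, -, h0, -⟩ := hS t; linarith
  · refine strictMono_nat_of_lt_succ fun t => ?_
    obtain ⟨a, b, ha, -, -, h1, -⟩ := hS t; linarith
  · refine strictMono_nat_of_lt_succ fun t => ?_
    obtain ⟨a, b, -, hb, -, -, -, h3⟩ := hS t; linarith
  · refine strictAnti_nat_of_succ_lt fun t => ?_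
    obtain ⟨a, b, -, hb, -, -, h2, -⟩ := hS t; linarith
  · obtain ⟨a, b, ha, -, h0, h1, -⟩ := hS t
    obtain ⟨hbw, hsum, -⟩ := hR t
    rw [h0, h1]
    exact neg_add_div_add_mem_Ioo (by linarith) hbw ha
  · obtain ⟨a, b, -, hb, -, -, h2, h3⟩ := hS t
    obtain ⟨-, -, hbw, hsum⟩ := hR t
    rw [h2, h3]
    exact neg_add_div_sub_mem_Ioo (by linarith) (by linarith) hb
end

section
/- Let η > 0 and let (w1^(t), b1^(t), w2^(t), b2^(t)) follow the specialized update rules. Set C1 = exp(η*exp(v1^(0))*exp(−2*w1^(0))). Then w1^(t) → ∞ as t → ∞, and for all t ≥ 0: (1/2)*ln(exp(2*w1^(0)) + η*exp(v1^(0))*t) ≤ w1^(t) ≤ (1/2)*ln(exp(2*w1^(0)) + 2*η*C1*exp(v1^(0))*t). -/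
/-- growth bounds on `w1` under the specialized update rules,
with `v1⁰ = w1⁰ - b1⁰` and `C1 = exp(η exp(v1⁰) exp(-2 w1⁰))`. -/
theorem stmt_6 (η : ℝ) (hη : 0 < η) (w1 b1 w2 b2 : ℕ → ℝ)
    (h1 : ∀ t : ℕ, w1 (t+1) = w1 t + η/2 * Real.exp (-(w1 t) - b1 t))
    (h2 : ∀ t : ℕ, b1 (t+1) = b1 t + η/2 * Real.exp (-(w1 t) - b1 t))
    (h3 : ∀ t : ℕ, w2 (t+1) = w2 t - η/2 * Real.exp (w2 t - b2 t))
    (h4 : ∀ t : ℕ, b2 (t+1) = b2 t + η/2 * Real.exp (w2 t - b2 t)) :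
    Filter.Tendsto w1 Filter.atTop Filter.atTop ∧
    ∀ t : ℕ,
      (1/2) * Real.log (Real.exp (2 * w1 0) + η * Real.exp (w1 0 - b1 0) * t) ≤ w1 t ∧
      w1 t ≤ (1/2) * Real.log (Real.exp (2 * w1 0) +
        2 * η * Real.exp (η * Real.exp (w1 0 - b1 0) * Real.exp (-2 * w1 0)) *
          Real.exp (w1 0 - b1 0) * t) := by
  set v : ℝ := w1 0 - b1 0 with hv
  set a : ℝ := η * Real.exp v with ha
  have ha_pos : 0 < a := mul_pos hη (Real.exp_pos v)
  -- invariance of w1 - b1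
  have hinv : ∀ t, w1 t - b1 t = v := by
    intro t
    induction t with
    | zero => rfl
    | succ n ih => rw [h1 n, h2 n]; linarith
  -- rewritten recursion
  have hrec : ∀ t, w1 (t+1) = w1 t + a/2 * Real.exp (-2 * w1 t) := by
    intro t
    have : -(w1 t) - b1 t = v + (-2 * w1 t) := by
      have := hinv t; linarith
    rw [h1 t, this, Real.exp_add, ha]; ring
  -- monotonicity: w1 0 ≤ w1 t
  have hmono : ∀ t, w1 0 ≤ w1 t := by
    intro t
    induction t with
    | zero => exact le_rfl
    | succ n ih =>
      have := hrec n
      have hp : 0 < a/2 * Real.exp (-2 * w1 n) :=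
        mul_pos (by linarith) (Real.exp_pos _)
      linarith
  -- lower bound on exp(2 w1 t)
  have hlow : ∀ t : ℕ, Real.exp (2 * w1 0) + a * t ≤ Real.exp (2 * w1 t) := by
    intro t
    induction t with
    | zero => simp
    | succ n ih =>
      have hr : 2 * w1 (n+1) = 2 * w1 n + a * Real.exp (-2 * w1 n) := by
        rw [hrec n]; ring
      have he : Real.exp (2 * w1 (n+1))
          = Real.exp (2 * w1 n) * Real.exp (a * Real.exp (-2 * w1 n)) := by
        rw [hr, Real.exp_add]
      have h1le : a * Real.exp (-2 * w1 n) + 1 ≤ Real.exp (a * Real.exp (-2 * w1 n)) :=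
        Real.add_one_le_exp _
      have hx : Real.exp (2 * w1 n) * Real.exp (-2 * w1 n) = 1 := by
        rw [← Real.exp_add]; norm_num
      have hxp : 0 < Real.exp (2 * w1 n) := Real.exp_pos _
      have : Real.exp (2 * w1 n) + a ≤ Real.exp (2 * w1 (n+1)) := by
        rw [he]
        calc Real.exp (2 * w1 n) + a
            = Real.exp (2 * w1 n) * (a * Real.exp (-2 * w1 n) + 1) := by
              rw [mul_add, ← mul_assoc, mul_comm (Real.exp (2 * w1 n)) a,
                mul_assoc, hx]; ring
          _ ≤ Real.exp (2 * w1 n) * Real.exp (a * Real.exp (-2 * w1 n)) :=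
              mul_le_mul_of_nonneg_left h1le hxp.le
      push_cast
      linarith
  -- C1
  set C : ℝ := Real.exp (a * Real.exp (-2 * w1 0)) with hC
  have hC1 : 1 ≤ C := Real.one_le_exp (by positivity)
  -- upper bound on exp(2 w1 t)
  have hup : ∀ t : ℕ, Real.exp (2 * w1 t) ≤ Real.exp (2 * w1 0) + 2 * a * C * t := by
    intro t
    induction t with
    | zero => simp
    | succ n ih =>
      have hr : 2 * w1 (n+1) = 2 * w1 n + a * Real.exp (-2 * w1 n) := by
        rw [hrec n]; ring
      set s : ℝ := a * Real.exp (-2 * w1 n) with hs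
      have hs_pos : 0 < s := mul_pos ha_pos (Real.exp_pos _)
      have he : Real.exp (2 * w1 (n+1)) = Real.exp (2 * w1 n) * Real.exp s := by
        rw [hr, Real.exp_add]
      -- exp s - 1 ≤ s * exp s
      have key : Real.exp s - 1 ≤ s * Real.exp s := by
        have h2 : (-s) + 1 ≤ Real.exp (-s) := Real.add_one_le_exp _
        have h3 : Real.exp (-s) * Real.exp s = 1 := by
          rw [← Real.exp_add]; norm_num
        nlinarith [Real.exp_pos s]
      have hx : Real.exp (2 * w1 n) * Real.exp (-2 * w1 n) = 1 := by
        rw [← Real.exp_add]; norm_num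
      -- s ≤ a * exp(-2 w1 0)
      have hsle : s ≤ a * Real.exp (-2 * w1 0) := by
        have := hmono n
        have : Real.exp (-2 * w1 n) ≤ Real.exp (-2 * w1 0) :=
          Real.exp_le_exp.mpr (by linarith)
        exact mul_le_mul_of_nonneg_left this ha_pos.le
      have hCs : Real.exp s ≤ C := Real.exp_le_exp.mpr hsle
      have hxp : 0 < Real.exp (2 * w1 n) := Real.exp_pos _
      have step : Real.exp (2 * w1 (n+1)) ≤ Real.exp (2 * w1 n) + a * C := by
        rw [he]
        have : Real.exp (2 * w1 n) * (Real.exp s - 1) ≤ a * C := by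
          calc Real.exp (2 * w1 n) * (Real.exp s - 1)
              ≤ Real.exp (2 * w1 n) * (s * Real.exp s) :=
                mul_le_mul_of_nonneg_left key hxp.le
            _ = a * Real.exp s := by
                have h9 : Real.exp (2 * w1 n) * (s * Real.exp s)
                    = (Real.exp (2 * w1 n) * Real.exp (-2 * w1 n)) * (a * Real.exp s) := by
                  rw [hs]; ring
                rw [h9, hx, one_mul]
            _ ≤ a * C := mul_le_mul_of_nonneg_left hCs ha_pos.le
        nlinarith
      have hac : 0 < a * C := by positivity
      push_cast
      linarith
  constructor
  · -- tendsto
    have h1' : Filter.Tendsto (fun t : ℕ => Real.exp (2 * w1 0) + a * t)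
        Filter.atTop Filter.atTop := by
      apply Filter.tendsto_atTop_add_const_left
      exact (tendsto_natCast_atTop_atTop).const_mul_atTop ha_pos
    have hg : Filter.Tendsto
        (fun t : ℕ => (1/2) * Real.log (Real.exp (2 * w1 0) + a * t))
        Filter.atTop Filter.atTop :=
      Filter.Tendsto.const_mul_atTop (by norm_num) (Real.tendsto_log_atTop.comp h1')
    refine Filter.tendsto_atTop_mono (fun t => ?_) hg
    have hpos : 0 < Real.exp (2 * w1 0) + a * (t:ℝ) := by positivity
    have h := Real.log_le_log hpos (hlow t)
    rw [Real.log_exp] at h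
    linarith
  · intro t
    constructor
    · have hpos : 0 < Real.exp (2 * w1 0) + a * (t:ℝ) := by positivity
      have h := Real.log_le_log hpos (hlow t)
      rw [Real.log_exp] at h
      linarith
    · have h := Real.log_le_log (Real.exp_pos _) (hup t)
      rw [Real.log_exp] at h
      have heq : 2 * a * C * (t:ℝ) = 2 * η * C * Real.exp v * t := by
        rw [ha]; ring
      rw [heq] at h
      linarith
end

section
/- Let η > 0 and let (w1^(t), b1^(t), w2^(t), b2^(t)) follow the specialized update rules. Set C2 = exp(η*exp(−u2^(0))*exp(2*w2^(0))). Then w2^(t) → −∞ as t → ∞, and for all t ≥ 0: −(1/2)*ln(exp(−2*w2^(0)) + 2*η*exp(−u2^(0))*C2*t) ≤ w2^(t) ≤ −(1/2)*ln(exp(−2*w2^(0)) + η*exp(−u2^(0))*t). -/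
/-- decay bounds on `w2` under the specialized update rules,
with `u2⁰ = w2⁰ + b2⁰` and `C2 = exp(η exp(-u2⁰) exp(2 w2⁰))`. -/
theorem stmt_7 (η : ℝ) (hη : 0 < η) (w1 b1 w2 b2 : ℕ → ℝ)
    (h1 : ∀ t : ℕ, w1 (t+1) = w1 t + η/2 * Real.exp (-(w1 t) - b1 t))
    (h2 : ∀ t : ℕ, b1 (t+1) = b1 t + η/2 * Real.exp (-(w1 t) - b1 t))
    (h3 : ∀ t : ℕ, w2 (t+1) = w2 t - η/2 * Real.exp (w2 t - b2 t))
    (h4 : ∀ t : ℕ, b2 (t+1) = b2 t + η/2 * Real.exp (w2 t - b2 t)) :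
    Filter.Tendsto w2 Filter.atTop Filter.atBot ∧
    ∀ t : ℕ,
      -(1/2) * Real.log (Real.exp (-2 * w2 0) +
        2 * η * Real.exp (-(w2 0 + b2 0)) *
          Real.exp (η * Real.exp (-(w2 0 + b2 0)) * Real.exp (2 * w2 0)) * t) ≤ w2 t ∧
      w2 t ≤ -(1/2) * Real.log (Real.exp (-2 * w2 0) +
        η * Real.exp (-(w2 0 + b2 0)) * t) := by
  set u : ℝ := w2 0 + b2 0 with hu
  have hsum : ∀ t, w2 t + b2 t = u := by
    intro t
    induction t with
    | zero => rfl
    | succ n ih => rw [h3, h4]; linarith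
  set a : ℝ := η * Real.exp (-u) with ha
  have ha0 : 0 < a := by positivity
  set X : ℕ → ℝ := fun t => Real.exp (-2 * w2 t) with hX
  have hXpos : ∀ t, 0 < X t := fun t => Real.exp_pos _
  have hXe : ∀ t, X t * Real.exp (2 * w2 t) = 1 := by
    intro t
    simp only [hX]
    rw [← Real.exp_add]
    norm_num
  have hstep : ∀ t, X (t+1) = X t * Real.exp (a * Real.exp (2 * w2 t)) := by
    intro t
    have hw : w2 t - b2 t = 2 * w2 t - u := by have := hsum t; linarith
    have he : Real.exp (2 * w2 t - u) = Real.exp (-u) * Real.exp (2 * w2 t) := by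
      rw [← Real.exp_add]; ring_nf
    simp only [hX]
    rw [h3, hw, ← Real.exp_add]
    congr 1
    rw [he, ha]
    ring
  -- lower bound on X
  have hlow : ∀ t : ℕ, X 0 + a * t ≤ X t := by
    intro t
    induction t with
    | zero => simp
    | succ n ih =>
      have hexp : (1 : ℝ) + a * Real.exp (2 * w2 n) ≤ Real.exp (a * Real.exp (2 * w2 n)) := by
        have := Real.add_one_le_exp (a * Real.exp (2 * w2 n)); linarith
      have hXn := hXpos n
      have h2' : X n + a ≤ X (n+1) := by
        rw [hstep n]
        nlinarith [hXe n]
      push_cast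
      linarith
  -- key inequality exp s ≤ 1 + s exp s
  have key : ∀ s : ℝ, Real.exp s ≤ 1 + s * Real.exp s := by
    intro s
    have h := Real.add_one_le_exp (-s)
    have hp := Real.exp_pos s
    have h1' : (1 - s) * Real.exp s ≤ Real.exp (-s) * Real.exp s := by nlinarith
    have h2' : Real.exp (-s) * Real.exp s = 1 := by rw [← Real.exp_add]; norm_num
    nlinarith
  set C : ℝ := Real.exp (a * Real.exp (2 * w2 0)) with hC
  have hC0 : 0 < C := Real.exp_pos _
  -- upper bound on X
  have hhigh : ∀ t : ℕ, X t ≤ X 0 + a * C * t := by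
    intro t
    induction t with
    | zero => simp
    | succ n ih =>
      have hmono : w2 n ≤ w2 0 := by
        have h0 : X 0 ≤ X n := by
          have := hlow n
          have : (0:ℝ) ≤ a * n := by positivity
          linarith [hlow n]
        have := Real.exp_le_exp.mp (show Real.exp (-2 * w2 0) ≤ Real.exp (-2 * w2 n) from h0)
        linarith
      set s : ℝ := a * Real.exp (2 * w2 n) with hs
      have hXs : X n * s = a := by
        rw [hs]
        linear_combination a * hXe n
      have hsC : Real.exp s ≤ C := by
        rw [hC]
        apply Real.exp_le_exp.mpr
        have := Real.exp_le_exp.mpr (show 2 * w2 n ≤ 2 * w2 0 by linarith)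
        nlinarith
      have k1 : X n * Real.exp s ≤ X n * (1 + s * Real.exp s) :=
        mul_le_mul_of_nonneg_left (key s) (hXpos n).le
      have k2 : X n * (1 + s * Real.exp s) = X n + a * Real.exp s := by
        linear_combination Real.exp s * hXs
      have k3 : X (n+1) ≤ X n + a * C := by
        rw [hstep n, ← hs]
        nlinarith
      push_cast
      nlinarith
  -- translate the X bounds to w2 bounds
  have hub : ∀ t : ℕ, w2 t ≤ -(1/2) * Real.log (X 0 + a * t) := by
    intro t
    have hpos : (0:ℝ) < X 0 + a * t := by positivity
    have hlog : Real.log (X 0 + a * t) ≤ Real.log (X t) :=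
      Real.log_le_log hpos (hlow t)
    have : Real.log (X t) = -2 * w2 t := by simp only [hX]; exact Real.log_exp _
    linarith
  have hlb : ∀ t : ℕ, -(1/2) * Real.log (X 0 + 2 * a * C * t) ≤ w2 t := by
    intro t
    have hXt := hXpos t
    have hle : X t ≤ X 0 + 2 * a * C * t := by
      have := hhigh t
      have h0 : (0:ℝ) ≤ a * C * t := by positivity
      nlinarith
    have hlog : Real.log (X t) ≤ Real.log (X 0 + 2 * a * C * t) :=
      Real.log_le_log hXt hle
    have : Real.log (X t) = -2 * w2 t := by simp only [hX]; exact Real.log_exp _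
    linarith
  constructor
  · -- tendsto atBot
    have h5 : Filter.Tendsto (fun t : ℕ => X 0 + a * (t:ℝ)) Filter.atTop Filter.atTop := by
      apply Filter.tendsto_atTop_add_const_left
      exact (tendsto_natCast_atTop_atTop).const_mul_atTop ha0
    have h6 : Filter.Tendsto (fun t : ℕ => Real.log (X 0 + a * (t:ℝ)))
        Filter.atTop Filter.atTop := Real.tendsto_log_atTop.comp h5
    have h7 : Filter.Tendsto (fun t : ℕ => (1/2) * Real.log (X 0 + a * (t:ℝ)))
        Filter.atTop Filter.atTop := h6.const_mul_atTop (by norm_num)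
    have h8 : Filter.Tendsto (fun t : ℕ => -((1/2) * Real.log (X 0 + a * (t:ℝ))))
        Filter.atTop Filter.atBot := Filter.tendsto_neg_atBot_iff.mpr h7
    apply Filter.tendsto_atBot_mono _ h8
    intro t
    have := hub t
    linarith
  · intro t
    constructor
    · have := hlb t
      have heq : Real.exp (-2 * w2 0) + 2 * η * Real.exp (-u) * C * t
          = X 0 + 2 * a * C * t := by
        simp only [hX, ha]; ring
      rw [heq]
      exact this
    · have := hub t
      have heq : Real.exp (-2 * w2 0) + η * Real.exp (-u) * t = X 0 + a * t := by
        simp only [hX, ha]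
      rw [heq]
      exact this
end

section
/- Let η > 0, suppose the initialization satisfies w1^(0) > 0, w2^(0) < 0, −1 < −b1^(0)/w1^(0) < −b2^(0)/w2^(0) < 1, and v1^(0) + u2^(0) ≠ 0, and let (w1^(t), b1^(t), w2^(t), b2^(t)) follow the specialized update rules. Define the decision threshold x*(t) = (b2^(t) − b1^(t))/(w1^(t) − w2^(t)). Then |x*(t)| = Θ(1/ln(t)): there exist constants c, C > 0 and T ∈ ℕ such that for all t ≥ T, c/ln(t) ≤ |x*(t)| ≤ C/ln(t). -/
/-!
Both `S = w1 + b1` and `R = b2 - w2` follow the recursion `x ↦ x + η e^{-x}`, while `w1 - b1`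
and `w2 + b2` are conserved. Along such a recursion the increments of `e^{x_t}` tend to `η`, so
`e^{x_t} / t → η` by Cesàro, i.e. `x_t = log t + log η + o(1)`. Hence `2 (b2 - b1) = R - S + K`
tends to `K = v1⁰ + u2⁰ ≠ 0`, while `2 (w1 - w2) = R + S + L ~ 2 log t` with `L = v1⁰ - u2⁰`,
so that `x*(t) · log t → K / 2`.
-/

open Real Filter Topology

section LogarithmicGrowth

variable {η : ℝ} {x : ℕ → ℝ}

lemma exp_succ_eq_of_step (hx : ∀ t, x (t + 1) = x t + η * exp (-x t)) (t : ℕ) :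
    exp (x (t + 1)) = exp (x t) * exp (η / exp (x t)) := by
  rw [hx, exp_add, exp_neg, div_eq_mul_inv]

lemma exp_add_le_exp_succ_of_step (hx : ∀ t, x (t + 1) = x t + η * exp (-x t)) (t : ℕ) :
    exp (x t) + η ≤ exp (x (t + 1)) := by
  have hE := exp_pos (x t)
  calc exp (x t) + η = exp (x t) * (η / exp (x t) + 1) := by
        rw [mul_add, mul_div_cancel₀ _ hE.ne', mul_one, add_comm]
    _ ≤ exp (x t) * exp (η / exp (x t)) := by gcongr; exact add_one_le_exp _
    _ = exp (x (t + 1)) := (exp_succ_eq_of_step hx t).symm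

lemma exp_zero_add_le_exp_of_step (hx : ∀ t, x (t + 1) = x t + η * exp (-x t)) (t : ℕ) :
    exp (x 0) + η * t ≤ exp (x t) := by
  induction t with
  | zero => simp
  | succ n ih =>
    push_cast
    linarith [exp_add_le_exp_succ_of_step hx n]

lemma tendsto_exp_atTop_of_step (hη : 0 < η) (hx : ∀ t, x (t + 1) = x t + η * exp (-x t)) :
    Tendsto (fun t => exp (x t)) atTop atTop :=
  tendsto_atTop_mono (exp_zero_add_le_exp_of_step hx) <|
    tendsto_atTop_add_const_left _ _ (tendsto_natCast_atTop_atTop.const_mul_atTop hη)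

/-- The increments of `exp ∘ x` are `η` times difference quotients of `exp` at `0` with step
`η / exp (x t) → 0`. -/
lemma tendsto_exp_succ_sub_exp_of_step (hη : 0 < η)
    (hx : ∀ t, x (t + 1) = x t + η * exp (-x t)) :
    Tendsto (fun t => exp (x (t + 1)) - exp (x t)) atTop (𝓝 η) := by
  have hstep : Tendsto (fun t => η / exp (x t)) atTop (𝓝[≠] 0) :=
    tendsto_nhdsWithin_of_tendsto_nhds_of_eventually_within _
      ((tendsto_exp_atTop_of_step hη hx).const_div_atTop η)
      (Eventually.of_forall fun t => (div_pos hη (exp_pos _)).ne')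
  have hslope := (hasDerivAt_iff_tendsto_slope_zero.mp (hasDerivAt_exp 0)).comp hstep
  rw [exp_zero] at hslope
  convert hslope.const_mul η using 1
  · ext t
    simp only [Function.comp_apply, smul_eq_mul, zero_add, exp_succ_eq_of_step hx t]
    field_simp
  · rw [mul_one]

lemma tendsto_exp_div_natCast_of_step (hη : 0 < η)
    (hx : ∀ t, x (t + 1) = x t + η * exp (-x t)) :
    Tendsto (fun t : ℕ => exp (x t) / t) atTop (𝓝 η) := by
  have hsum : ∀ t : ℕ, exp (x t) / t =
      (t : ℝ)⁻¹ * exp (x 0) +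
        (t : ℝ)⁻¹ * ∑ i ∈ Finset.range t, (exp (x (i + 1)) - exp (x i)) := by
    intro t
    rw [Finset.sum_range_sub (fun i => exp (x i)), div_eq_inv_mul]
    ring
  simp_rw [hsum]
  simpa using (tendsto_inv_atTop_zero.comp tendsto_natCast_atTop_atTop).mul_const (exp (x 0)) |>.add
    (tendsto_exp_succ_sub_exp_of_step hη hx).cesaro

theorem tendsto_sub_log_of_step (hη : 0 < η) (hx : ∀ t, x (t + 1) = x t + η * exp (-x t)) :
    Tendsto (fun t : ℕ => x t - log t) atTop (𝓝 (log η)) := by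
  refine ((tendsto_exp_div_natCast_of_step hη hx).log hη.ne').congr' ?_
  filter_upwards [eventually_ne_atTop 0] with t ht
  rw [log_div (exp_pos _).ne' (Nat.cast_ne_zero.mpr ht), log_exp]

end LogarithmicGrowth

theorem tendsto_div_mul_log_of_sub_log {S R : ℕ → ℝ} {a : ℝ}
    (hS : Tendsto (fun t : ℕ => S t - log t) atTop (𝓝 a))
    (hR : Tendsto (fun t : ℕ => R t - log t) atTop (𝓝 a)) (K L : ℝ) :
    Tendsto (fun t : ℕ => (R t - S t + K) / (R t + S t + L) * log t) atTop (𝓝 (K / 2)) := by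
  have hlog : Tendsto (fun t : ℕ => log t) atTop atTop :=
    tendsto_log_atTop.comp tendsto_natCast_atTop_atTop
  have hnum : Tendsto (fun t : ℕ => R t - S t + K) atTop (𝓝 K) := by
    simpa using ((hR.sub hS).add_const K).congr fun t => by ring
  have hden : Tendsto (fun t : ℕ => (R t + S t + L) / log t) atTop (𝓝 2) := by
    have hrem := ((hR.add hS).add_const L).div_atTop hlog
    refine ((zero_add (2 : ℝ)) ▸ hrem.add_const 2).congr' ?_
    filter_upwards [hlog.eventually_gt_atTop 0] with t ht
    field_simp
    ring
  refine (hnum.div hden two_ne_zero).congr' ?_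
  filter_upwards [hlog.eventually_gt_atTop 0] with t ht
  rw [Pi.div_apply, div_div_eq_mul_div, mul_div_right_comm]

theorem exists_div_le_abs_le_div_of_tendsto_mul {α : Type*} [SemilatticeSup α] [Nonempty α]
    {f g : α → ℝ} {ℓ : ℝ} (hℓ : ℓ ≠ 0) (hg : ∀ᶠ t in atTop, 0 < g t)
    (h : Tendsto (fun t => f t * g t) atTop (𝓝 ℓ)) :
    ∃ c C : ℝ, 0 < c ∧ 0 < C ∧ ∃ T : α, ∀ t, T ≤ t →
      c / g t ≤ |f t| ∧ |f t| ≤ C / g t := by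
  have hℓ' : 0 < |ℓ| := abs_pos.mpr hℓ
  have habs := h.abs
  obtain ⟨T, hT⟩ := eventually_atTop.mp <| hg.and <|
    (habs.eventually_const_lt (by linarith : |ℓ| / 2 < |ℓ|)).and
    (habs.eventually_lt_const (by linarith : |ℓ| < 2 * |ℓ|))
  refine ⟨|ℓ| / 2, 2 * |ℓ|, by positivity, by positivity, T, fun t ht => ?_⟩
  obtain ⟨hgt, hlow, hup⟩ := hT t ht
  rw [abs_mul, abs_of_pos hgt] at hlow hup
  exact ⟨(div_le_iff₀ hgt).mpr hlow.le, (le_div_iff₀ hgt).mpr hup.le⟩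

theorem stmt_8_general (η : ℝ) (hη : 0 < η) (w1 b1 w2 b2 : ℕ → ℝ)
    (h1 : ∀ t : ℕ, w1 (t+1) = w1 t + η/2 * Real.exp (-(w1 t) - b1 t))
    (h2 : ∀ t : ℕ, b1 (t+1) = b1 t + η/2 * Real.exp (-(w1 t) - b1 t))
    (h3 : ∀ t : ℕ, w2 (t+1) = w2 t - η/2 * Real.exp (w2 t - b2 t))
    (h4 : ∀ t : ℕ, b2 (t+1) = b2 t + η/2 * Real.exp (w2 t - b2 t))
    (hvu : (w1 0 - b1 0) + (w2 0 + b2 0) ≠ 0) :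
    ∃ c C : ℝ, 0 < c ∧ 0 < C ∧ ∃ T : ℕ, ∀ t : ℕ, T ≤ t →
      c / Real.log t ≤ |(b2 t - b1 t) / (w1 t - w2 t)| ∧
      |(b2 t - b1 t) / (w1 t - w2 t)| ≤ C / Real.log t := by
  set S : ℕ → ℝ := fun t => w1 t + b1 t
  set R : ℕ → ℝ := fun t => b2 t - w2 t
  have hS : ∀ t, S (t + 1) = S t + η * exp (-S t) := fun t => by
    simp only [S, h1, h2, neg_add']
    ring
  have hR : ∀ t, R (t + 1) = R t + η * exp (-R t) := fun t => by
    simp only [R, h3, h4, neg_sub]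
    ring
  have hv : ∀ t, w1 t - b1 t = w1 0 - b1 0 := fun t => by
    induction t with
    | zero => rfl
    | succ n ih => rw [h1, h2, ← ih]; ring
  have hu : ∀ t, w2 t + b2 t = w2 0 + b2 0 := fun t => by
    induction t with
    | zero => rfl
    | succ n ih => rw [h3, h4, ← ih]; ring
  have hratio : ∀ t, (b2 t - b1 t) / (w1 t - w2 t) =
      (R t - S t + ((w1 0 - b1 0) + (w2 0 + b2 0))) /
        (R t + S t + ((w1 0 - b1 0) - (w2 0 + b2 0))) := fun t => by
    rw [← mul_div_mul_left _ _ (two_ne_zero' ℝ)]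
    congr 1 <;> linarith [hv t, hu t]
  simp_rw [hratio]
  exact exists_div_le_abs_le_div_of_tendsto_mul (div_ne_zero hvu two_ne_zero)
    ((tendsto_log_atTop.comp tendsto_natCast_atTop_atTop).eventually_gt_atTop 0)
    (tendsto_div_mul_log_of_sub_log (tendsto_sub_log_of_step hη hS)
      (tendsto_sub_log_of_step hη hR) _ _)

/-- under the specialized update rules with ordered breakpoints
and `v1⁰ + u2⁰ ≠ 0`, the decision threshold
`x*(t) = (b2 - b1)/(w1 - w2)` satisfies `|x*(t)| = Θ(1/ln t)`. -/
theorem stmt_8 (η : ℝ) (hη : 0 < η) (w1 b1 w2 b2 : ℕ → ℝ)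
    (h1 : ∀ t : ℕ, w1 (t+1) = w1 t + η/2 * Real.exp (-(w1 t) - b1 t))
    (h2 : ∀ t : ℕ, b1 (t+1) = b1 t + η/2 * Real.exp (-(w1 t) - b1 t))
    (h3 : ∀ t : ℕ, w2 (t+1) = w2 t - η/2 * Real.exp (w2 t - b2 t))
    (h4 : ∀ t : ℕ, b2 (t+1) = b2 t + η/2 * Real.exp (w2 t - b2 t))
    (hw1 : 0 < w1 0) (hw2 : w2 0 < 0)
    (hβ1 : -1 < -(b1 0) / w1 0)
    (hβ12 : -(b1 0) / w1 0 < -(b2 0) / w2 0)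
    (hβ2 : -(b2 0) / w2 0 < 1)
    (hvu : (w1 0 - b1 0) + (w2 0 + b2 0) ≠ 0) :
    ∃ c C : ℝ, 0 < c ∧ 0 < C ∧ ∃ T : ℕ, ∀ t : ℕ, T ≤ t →
      c / Real.log t ≤ |(b2 t - b1 t) / (w1 t - w2 t)| ∧
      |(b2 t - b1 t) / (w1 t - w2 t)| ≤ C / Real.log t :=
  stmt_8_general η hη w1 b1 w2 b2 h1 h2 h3 h4 hvu
end

section
/- Let η > 0, suppose the initialization satisfies w1^(0) > 0, w2^(0) < 0, and −1 < −b1^(0)/w1^(0) < −b2^(0)/w2^(0) < 1, and let (w1^(t), b1^(t), w2^(t), b2^(t)) follow the specialized update rules. Then lim_{t→∞} (b2^(t) − b1^(t)) = lim_{t→∞} (w1^(t) + w2^(t)) = (v1^(0) + u2^(0))/2 = (w1^(0) − b1^(0) + w2^(0) + b2^(0))/2. -/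
open Filter Real

private def Rec' (η : ℝ) (x : ℕ → ℝ) : Prop := ∀ t, x (t+1) = x t + η * Real.exp (-(x t))

private lemma rec_mono {η : ℝ} (hη : 0 < η) {x : ℕ → ℝ} (hx : Rec' η x) : Monotone x := by
  apply monotone_nat_of_le_succ
  intro t
  rw [hx t]
  nlinarith [Real.exp_pos (-(x t))]

private lemma rec_exp_lb {η : ℝ} {x : ℕ → ℝ} (hx : Rec' η x) :
    ∀ t : ℕ, Real.exp (x 0) + η * t ≤ Real.exp (x t) := by
  intro t
  induction t with
  | zero => simp
  | succ n ih =>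
    rw [hx n, Real.exp_add]
    have hmul : Real.exp (x n) * Real.exp (-(x n)) = 1 := by
      rw [← Real.exp_add]; simp
    have h1 : 1 + η * Real.exp (-(x n)) ≤ Real.exp (η * Real.exp (-(x n))) := by
      have := Real.add_one_le_exp (η * Real.exp (-(x n))); linarith
    have hpos := Real.exp_pos (x n)
    have h2 := mul_le_mul_of_nonneg_left h1 hpos.le
    have h3 : Real.exp (x n) * (1 + η * Real.exp (-(x n))) = Real.exp (x n) + η := by
      calc Real.exp (x n) * (1 + η * Real.exp (-(x n)))
          = Real.exp (x n) + η * (Real.exp (x n) * Real.exp (-(x n))) := by ring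
        _ = Real.exp (x n) + η := by rw [hmul, mul_one]
    rw [h3] at h2
    push_cast
    linarith

private lemma rec_tendsto {η : ℝ} (hη : 0 < η) {x : ℕ → ℝ} (hx : Rec' η x) :
    Tendsto x atTop atTop := by
  have h : Tendsto (fun t : ℕ => Real.exp (x 0) + η * t) atTop atTop := by
    apply tendsto_atTop_add_const_left
    exact Tendsto.const_mul_atTop hη tendsto_natCast_atTop_atTop
  have h2 : Tendsto (fun t : ℕ => Real.log (Real.exp (x 0) + η * t)) atTop atTop :=
    Real.tendsto_log_atTop.comp h
  apply tendsto_atTop_mono _ h2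
  intro t
  calc Real.log (Real.exp (x 0) + η * t) ≤ Real.log (Real.exp (x t)) :=
        Real.log_le_log (by positivity) (rec_exp_lb hx t)
    _ = x t := Real.log_exp _

private lemma rec_key {η : ℝ} (hη : 0 < η) {a b : ℕ → ℝ} (ha : Rec' η a) (hb : Rec' η b)
    (h0 : b 0 ≤ a 0) (hb0 : η * Real.exp (-(b 0)) ≤ 1) :
    Tendsto (fun t => a t - b t) atTop (nhds 0) := by
  have hbm := rec_mono hη hb
  have hbsmall : ∀ t, η * Real.exp (-(b t)) ≤ 1 := by
    intro t
    have h : Real.exp (-(b t)) ≤ Real.exp (-(b 0)) :=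
      Real.exp_le_exp.2 (neg_le_neg (hbm (Nat.zero_le t)))
    nlinarith
  have hord : ∀ t, b t ≤ a t := by
    intro t; induction t with
    | zero => exact h0
    | succ n ih =>
      rw [ha n, hb n]
      have h1 : Real.exp (-(a n)) = Real.exp (-(b n)) * Real.exp (-(a n - b n)) := by
        rw [← Real.exp_add]; ring_nf
      have h2 : 1 - (a n - b n) ≤ Real.exp (-(a n - b n)) := by
        have := Real.add_one_le_exp (-(a n - b n)); linarith
      have hE : Real.exp (-(b n)) - Real.exp (-(a n)) ≤ Real.exp (-(b n)) * (a n - b n) := by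
        nlinarith [Real.exp_pos (-(b n))]
      nlinarith [hbsmall n, Real.exp_pos (-(b n)), Real.exp_pos (-(a n))]
  set d : ℕ → ℝ := fun t => a t - b t with hd
  have hdnn : ∀ t, 0 ≤ d t := fun t => sub_nonneg.2 (hord t)
  have hanti : Antitone d := by
    apply antitone_nat_of_succ_le
    intro n
    simp only [hd]
    rw [ha n, hb n]
    have h : Real.exp (-(a n)) ≤ Real.exp (-(b n)) :=
      Real.exp_le_exp.2 (neg_le_neg (hord n))
    nlinarith
  have hbdd : BddBelow (Set.range d) := ⟨0, by rintro y ⟨t, rfl⟩; exact hdnn t⟩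
  have hL := tendsto_atTop_ciInf hanti hbdd
  set L := ⨅ t, d t with hLdef
  have hL0 : 0 ≤ L := le_ciInf hdnn
  have hLle : ∀ t, L ≤ d t := fun t => ciInf_le hbdd t
  have hLz : L = 0 := by
    by_contra hne
    have hLpos : 0 < L := lt_of_le_of_ne hL0 (Ne.symm hne)
    have hfac : 0 < 1 - Real.exp (-L) := by
      have h : Real.exp (-L) < Real.exp 0 := Real.exp_lt_exp.2 (by linarith)
      rw [Real.exp_zero] at h
      linarith
    have hstep : ∀ t, d (t+1) ≤ d t - (1 - Real.exp (-L)) * (η * Real.exp (-(b t))) := by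
      intro t
      have h1 : Real.exp (-(a t)) = Real.exp (-(b t)) * Real.exp (-(d t)) := by
        simp only [hd]
        rw [← Real.exp_add]; ring_nf
      have h2 : Real.exp (-(d t)) ≤ Real.exp (-L) := Real.exp_le_exp.2 (neg_le_neg (hLle t))
      simp only [hd]
      rw [ha t, hb t]
      nlinarith [Real.exp_pos (-(b t)), mul_nonneg hη.le (Real.exp_pos (-(b t))).le,
        mul_le_mul_of_nonneg_left h2 (mul_nonneg hη.le (Real.exp_pos (-(b t))).le)]
    have htel : ∀ t, d t ≤ d 0 - (1 - Real.exp (-L)) * (b t - b 0) := by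
      intro t; induction t with
      | zero => simp
      | succ n ih =>
        have hs := hstep n
        have hb' : b (n+1) = b n + η * Real.exp (-(b n)) := hb n
        nlinarith
    obtain ⟨t, ht⟩ :=
      (tendsto_atTop.1 (rec_tendsto hη hb) (b 0 + (d 0 + 1)/(1 - Real.exp (-L)))).exists
    have hbt : (d 0 + 1) / (1 - Real.exp (-L)) ≤ b t - b 0 := by linarith
    have hmul := (div_le_iff₀ hfac).1 hbt
    nlinarith [htel t, hdnn t]
  rw [hLz] at hL
  exact hL

private lemma rec_diff {η : ℝ} (hη : 0 < η) {a b : ℕ → ℝ} (ha : Rec' η a) (hb : Rec' η b) :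
    Tendsto (fun t => a t - b t) atTop (nhds 0) := by
  have hsmall : ∀ x : ℝ, Real.log η ≤ x → η * Real.exp (-x) ≤ 1 := by
    intro x hx
    have h : Real.exp (-x) ≤ Real.exp (-(Real.log η)) := Real.exp_le_exp.2 (neg_le_neg hx)
    rw [Real.exp_neg, Real.exp_neg, Real.exp_log hη] at h
    rw [Real.exp_neg]
    calc η * (Real.exp x)⁻¹ ≤ η * η⁻¹ := mul_le_mul_of_nonneg_left h hη.le
      _ = 1 := mul_inv_cancel₀ hη.ne'
  obtain ⟨T, hTa, hTb⟩ : ∃ T, Real.log η ≤ a T ∧ Real.log η ≤ b T := by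
    have h1 := tendsto_atTop.1 (rec_tendsto hη ha) (Real.log η)
    have h2 := tendsto_atTop.1 (rec_tendsto hη hb) (Real.log η)
    exact (h1.and h2).exists
  have ha' : Rec' η (fun t => a (t + T)) := by
    intro t
    show a (t + 1 + T) = _
    rw [show t + 1 + T = (t + T) + 1 by omega, ha (t + T)]
  have hb' : Rec' η (fun t => b (t + T)) := by
    intro t
    show b (t + 1 + T) = _
    rw [show t + 1 + T = (t + T) + 1 by omega, hb (t + T)]
  rcases le_total (b T) (a T) with hc | hc
  · have h := rec_key hη ha' hb' (by simpa using hc) (by simpa using hsmall _ hTb)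
    exact (tendsto_add_atTop_iff_nat T).1 h
  · have h := rec_key hη hb' ha' (by simpa using hc) (by simpa using hsmall _ hTa)
    have h2 : Tendsto (fun t => a (t + T) - b (t + T)) atTop (nhds 0) := by
      have := h.neg
      simpa [neg_sub] using this
    exact (tendsto_add_atTop_iff_nat T).1 h2

/-- under the specialized update rules with ordered breakpoints,
`b2 - b1` and `w1 + w2` both converge to `(w1⁰ - b1⁰ + w2⁰ + b2⁰)/2`. -/
theorem stmt_9 (η : ℝ) (hη : 0 < η) (w1 b1 w2 b2 : ℕ → ℝ)
    (h1 : ∀ t : ℕ, w1 (t+1) = w1 t + η/2 * Real.exp (-(w1 t) - b1 t))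
    (h2 : ∀ t : ℕ, b1 (t+1) = b1 t + η/2 * Real.exp (-(w1 t) - b1 t))
    (h3 : ∀ t : ℕ, w2 (t+1) = w2 t - η/2 * Real.exp (w2 t - b2 t))
    (h4 : ∀ t : ℕ, b2 (t+1) = b2 t + η/2 * Real.exp (w2 t - b2 t))
    (hw1 : 0 < w1 0) (hw2 : w2 0 < 0)
    (hβ1 : -1 < -(b1 0) / w1 0)
    (hβ12 : -(b1 0) / w1 0 < -(b2 0) / w2 0)
    (hβ2 : -(b2 0) / w2 0 < 1) :
    Filter.Tendsto (fun t => b2 t - b1 t) Filter.atTop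
      (nhds ((w1 0 - b1 0 + w2 0 + b2 0) / 2)) ∧
    Filter.Tendsto (fun t => w1 t + w2 t) Filter.atTop
      (nhds ((w1 0 - b1 0 + w2 0 + b2 0) / 2)) := by
  have hs1 : Rec' η (fun t => w1 t + b1 t) := by
    intro t
    show w1 (t+1) + b1 (t+1) = (w1 t + b1 t) + η * Real.exp (-(w1 t + b1 t))
    rw [h1 t, h2 t, show -(w1 t) - b1 t = -(w1 t + b1 t) by ring]
    ring
  have hs2 : Rec' η (fun t => b2 t - w2 t) := by
    intro t
    show b2 (t+1) - w2 (t+1) = (b2 t - w2 t) + η * Real.exp (-(b2 t - w2 t))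
    rw [h3 t, h4 t, show -(b2 t - w2 t) = w2 t - b2 t by ring]
    ring
  have hv : ∀ t, w1 t - b1 t = w1 0 - b1 0 := by
    intro t; induction t with
    | zero => rfl
    | succ n ih => rw [h1 n, h2 n]; linarith
  have hu : ∀ t, w2 t + b2 t = w2 0 + b2 0 := by
    intro t; induction t with
    | zero => rfl
    | succ n ih => rw [h3 n, h4 n]; linarith
  have hd : Tendsto (fun t => (b2 t - w2 t) - (w1 t + b1 t)) atTop (nhds 0) :=
    rec_diff hη hs2 hs1
  set C : ℝ := (w1 0 - b1 0 + w2 0 + b2 0) / 2 with hC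
  constructor
  · have h : Tendsto (fun t => C + ((b2 t - w2 t) - (w1 t + b1 t))/2) atTop (nhds (C + 0/2)) :=
      tendsto_const_nhds.add (hd.div_const 2)
    simp only [zero_div, add_zero] at h
    refine h.congr fun t => ?_
    have := hv t; have := hu t
    rw [hC]; linarith
  · have hd2 : Tendsto (fun t => (w1 t + b1 t) - (b2 t - w2 t)) atTop (nhds 0) := by
      have h0 := hd.neg
      rw [neg_zero] at h0
      exact h0.congr fun t => by ring
    have h : Tendsto (fun t => C + ((w1 t + b1 t) - (b2 t - w2 t))/2) atTop (nhds (C + 0/2)) :=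
      tendsto_const_nhds.add (hd2.div_const 2)
    simp only [zero_div, add_zero] at h
    refine h.congr fun t => ?_
    have := hv t; have := hu t
    rw [hC]; linarith
end

section
/- Let η > 0, suppose the initialization satisfies w1^(0) > 0, w2^(0) < 0, and −1 < −b2^(0)/w2^(0) ≤ −b1^(0)/w1^(0) < 1, and let (w1^(t), b1^(t), w2^(t), b2^(t)) follow the specialized update rules. Then there exists T ≥ 0 such that b1^(T) > 0 and b2^(T) > 0; consequently −1 < −b1^(T)/w1^(T) < 0 < −b2^(T)/w2^(T) < 1, i.e., the breakpoint of the first neuron lies strictly to the left of the breakpoint of the second neuron. -/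
private lemma diverge_aux (η : ℝ) (hη : 0 < η) (s : ℕ → ℝ)
    (hs : ∀ t, s (t+1) = s t + η * Real.exp (-(s t))) (M : ℝ) :
    ∃ T, M < s T := by
  by_contra h
  push_neg at h
  have hc : 0 < η * Real.exp (-M) := by positivity
  have key : ∀ n : ℕ, s 0 + n * (η * Real.exp (-M)) ≤ s n := by
    intro n
    induction n with
    | zero => simp
    | succ n ih =>
      have hle : Real.exp (-M) ≤ Real.exp (-(s n)) :=
        Real.exp_le_exp.mpr (neg_le_neg (h n))
      have hsn := hs n
      push_cast
      nlinarith [hle, hsn]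
  obtain ⟨n, hn⟩ := exists_nat_gt ((M - s 0) / (η * Real.exp (-M)))
  have hk := key n
  rw [div_lt_iff₀ hc] at hn
  have hM := h n
  linarith

/-- under the specialized update rules starting from a degenerate
configuration `-1 < β2⁰ ≤ β1⁰ < 1`, after finitely many iterations both biases
become positive, so the breakpoints satisfy `-1 < β1 < 0 < β2 < 1`. -/
theorem stmt_10 (η : ℝ) (hη : 0 < η) (w1 b1 w2 b2 : ℕ → ℝ)
    (h1 : ∀ t : ℕ, w1 (t+1) = w1 t + η/2 * Real.exp (-(w1 t) - b1 t))
    (h2 : ∀ t : ℕ, b1 (t+1) = b1 t + η/2 * Real.exp (-(w1 t) - b1 t))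
    (h3 : ∀ t : ℕ, w2 (t+1) = w2 t - η/2 * Real.exp (w2 t - b2 t))
    (h4 : ∀ t : ℕ, b2 (t+1) = b2 t + η/2 * Real.exp (w2 t - b2 t))
    (hw1 : 0 < w1 0) (hw2 : w2 0 < 0)
    (hβ2 : -1 < -(b2 0) / w2 0)
    (hβ21 : -(b2 0) / w2 0 ≤ -(b1 0) / w1 0)
    (hβ1 : -(b1 0) / w1 0 < 1) :
    ∃ T : ℕ, 0 < b1 T ∧ 0 < b2 T ∧
      -1 < -(b1 T) / w1 T ∧ -(b1 T) / w1 T < 0 ∧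
      0 < -(b2 T) / w2 T ∧ -(b2 T) / w2 T < 1 := by
  -- translate initial breakpoint conditions
  have hβ1' : -1 < -(b1 0) / w1 0 := lt_of_lt_of_le hβ2 hβ21
  have hb1w1 : b1 0 < w1 0 := by
    rw [lt_div_iff₀ hw1] at hβ1'; linarith
  have hw2b2 : w2 0 + b2 0 < 0 := by
    have hβ2' : -(b2 0) / w2 0 < 1 := lt_of_le_of_lt hβ21 hβ1
    rw [div_lt_one_of_neg hw2] at hβ2'; linarith
  -- conserved quantities
  have d1 : ∀ t, w1 t - b1 t = w1 0 - b1 0 := by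
    intro t
    induction t with
    | zero => rfl
    | succ n ih => rw [h1, h2]; linarith
  have d2 : ∀ t, w2 t + b2 t = w2 0 + b2 0 := by
    intro t
    induction t with
    | zero => rfl
    | succ n ih => rw [h3, h4]; linarith
  -- the sums satisfy the divergent recursion
  set s1 : ℕ → ℝ := fun t => w1 t + b1 t with hs1def
  set s2 : ℕ → ℝ := fun t => b2 t - w2 t with hs2def
  have hs1 : ∀ t, s1 (t+1) = s1 t + η * Real.exp (-(s1 t)) := by
    intro t
    simp only [hs1def, h1, h2]
    have : -(w1 t) - b1 t = -(w1 t + b1 t) := by ring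
    rw [this]; ring
  have hs2 : ∀ t, s2 (t+1) = s2 t + η * Real.exp (-(s2 t)) := by
    intro t
    simp only [hs2def, h3, h4]
    have : w2 t - b2 t = -(b2 t - w2 t) := by ring
    rw [this]; ring
  -- bias formulas
  have hb1 : ∀ t, b1 t = (s1 t - (w1 0 - b1 0)) / 2 := by
    intro t; have := d1 t; simp only [hs1def]; linarith
  have hb2 : ∀ t, b2 t = (s2 t + (w2 0 + b2 0)) / 2 := by
    intro t; have := d2 t; simp only [hs2def]; linarith
  -- monotonicity of biases
  have hmono1 : Monotone b1 := by
    apply monotone_nat_of_le_succ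
    intro t
    have hp : 0 < η/2 * Real.exp (-(w1 t) - b1 t) := by positivity
    rw [h2]; linarith
  have hmono2 : Monotone b2 := by
    apply monotone_nat_of_le_succ
    intro t
    have hp : 0 < η/2 * Real.exp (w2 t - b2 t) := by positivity
    rw [h4]; linarith
  -- find times with positive biases
  obtain ⟨T1, hT1⟩ := diverge_aux η hη s1 hs1 (w1 0 - b1 0)
  obtain ⟨T2, hT2⟩ := diverge_aux η hη s2 hs2 (-(w2 0 + b2 0))
  have hT1' : w1 0 - b1 0 < w1 T1 + b1 T1 := hT1
  have hT2' : -(w2 0 + b2 0) < b2 T2 - w2 T2 := hT2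
  have hb1T1 : 0 < b1 T1 := by have := d1 T1; linarith
  have hb2T2 : 0 < b2 T2 := by have := d2 T2; linarith
  refine ⟨max T1 T2, ?_, ?_, ?_, ?_, ?_, ?_⟩
  all_goals {
    have hb1T : 0 < b1 (max T1 T2) :=
      lt_of_lt_of_le hb1T1 (hmono1 (le_max_left T1 T2))
    have hb2T : 0 < b2 (max T1 T2) :=
      lt_of_lt_of_le hb2T2 (hmono2 (le_max_right T1 T2))
    have hd1T := d1 (max T1 T2)
    have hd2T := d2 (max T1 T2)
    have hw1T : 0 < w1 (max T1 T2) := by linarith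
    have hw2T : w2 (max T1 T2) < 0 := by linarith
    first
    | exact hb1T
    | exact hb2T
    | { rw [lt_div_iff₀ hw1T]; linarith }
    | { exact div_neg_of_neg_of_pos (by linarith) hw1T }
    | { exact div_pos_of_neg_of_neg (by linarith) hw2T }
    | { rw [div_lt_one_of_neg hw2T]; linarith }
  }
end

section
/- Let η > 0 and let (w1^(t), b1^(t), w2^(t), b2^(t)) be real sequences satisfying for all t ≥ 0: w1^(t+1) = w1^(t) + (η/2)*exp(−w1^(t) + b1^(t) + w2^(t) − b2^(t)) + (η/2)*exp(−w1^(t) − b1^(t)); b1^(t+1) = b1^(t) − (η/2)*exp(−w1^(t) + b1^(t) + w2^(t) − b2^(t)) + (η/2)*exp(−w1^(t) − b1^(t)); w2^(t+1) = w2^(t) − (η/2)*exp(−w1^(t) + b1^(t) + w2^(t) − b2^(t)); b2^(t+1) = b2^(t) + (η/2)*exp(−w1^(t) + b1^(t) + w2^(t) − b2^(t)). Write vj^(t) = wj^(t) − bj^(t). Then v1^(t) + v2^(t) = v1^(0) + v2^(0) for all t, and there exists T ≥ 0 such that v1^(T) > 0 (so if w1^(T) > 0, the breakpoint −b1^(T)/w1^(T)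 > −1). -/
/-- in the regime where the first neuron is active on both
instances and the second only on `x1`, the quantity `v1 + v2` (with
`vj = wj - bj`) is conserved, and after finitely many iterations `v1 > 0`. -/
theorem stmt_11 (η : ℝ) (hη : 0 < η) (w1 b1 w2 b2 : ℕ → ℝ)
    (h1 : ∀ t : ℕ, w1 (t+1) = w1 t
      + η/2 * Real.exp (-(w1 t) + b1 t + w2 t - b2 t)
      + η/2 * Real.exp (-(w1 t) - b1 t))
    (h2 : ∀ t : ℕ, b1 (t+1) = b1 t
      - η/2 * Real.exp (-(w1 t) + b1 t + w2 t - b2 t)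
      + η/2 * Real.exp (-(w1 t) - b1 t))
    (h3 : ∀ t : ℕ, w2 (t+1) = w2 t
      - η/2 * Real.exp (-(w1 t) + b1 t + w2 t - b2 t))
    (h4 : ∀ t : ℕ, b2 (t+1) = b2 t
      + η/2 * Real.exp (-(w1 t) + b1 t + w2 t - b2 t)) :
    (∀ t : ℕ, (w1 t - b1 t) + (w2 t - b2 t) = (w1 0 - b1 0) + (w2 0 - b2 0)) ∧
    ∃ T : ℕ, 0 < w1 T - b1 T ∧ (0 < w1 T → -1 < -(b1 T) / w1 T) := by
  set v1 : ℕ → ℝ := fun t => w1 t - b1 t with hv1def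
  set v2 : ℕ → ℝ := fun t => w2 t - b2 t with hv2def
  -- v1 recursion
  have hv1 : ∀ t, v1 (t+1) = v1 t + η * Real.exp (v2 t - v1 t) := by
    intro t
    have e : (-(w1 t) + b1 t + w2 t - b2 t) = v2 t - v1 t := by
      simp [hv1def, hv2def]; ring
    simp only [hv1def, hv2def, h1 t, h2 t, e]
    ring
  have hv2 : ∀ t, v2 (t+1) = v2 t - η * Real.exp (v2 t - v1 t) := by
    intro t
    simp only [hv1def, hv2def, h3 t, h4 t]
    ring
  have hcons : ∀ t, v1 t + v2 t = v1 0 + v2 0 := by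
    intro t
    induction t with
    | zero => rfl
    | succ n ih => rw [hv1 n, hv2 n]; linarith
  refine ⟨hcons, ?_⟩
  set S : ℝ := v1 0 + v2 0 with hS
  set c : ℝ := Real.exp S with hc
  have hcpos : 0 < c := Real.exp_pos S
  -- monotone growth
  have hmono : ∀ t, v1 t < v1 (t+1) := by
    intro t
    rw [hv1 t]
    nlinarith [Real.exp_pos (v2 t - v1 t)]
  have key : ∀ t : ℕ, 0 < v1 t ∨ v1 0 + t * (η * c) ≤ v1 t := by
    intro t
    induction t with
    | zero => right; simp
    | succ n ih =>
      rcases ih with h | h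
      · left; exact lt_trans h (hmono n)
      · by_cases hpos : 0 < v1 n
        · left; exact lt_trans hpos (hmono n)
        · right
          push_neg at hpos
          have hsum := hcons n
          have hexp : c ≤ Real.exp (v2 n - v1 n) := by
            apply Real.exp_le_exp.mpr
            have : v2 n = S - v1 n := by rw [hS]; linarith
            rw [this]
            linarith
          rw [hv1 n]
          push_cast
          nlinarith
  obtain ⟨T, hT⟩ := exists_nat_gt ((-(v1 0)) / (η * c))
  have hηc : 0 < η * c := mul_pos hη hcpos
  have hTlt : -(v1 0) < T * (η * c) := by
    rwa [div_lt_iff₀ hηc] at hT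
  have hv1T : 0 < v1 T := by
    rcases key T with h | h
    · exact h
    · linarith
  refine ⟨T, hv1T, fun hw => ?_⟩
  rw [lt_div_iff₀ hw]
  have : v1 T = w1 T - b1 T := rfl
  linarith
end

section
/- Let η > 0 and let (w1^(t), b1^(t), w2^(t), b2^(t)) be real sequences satisfying for all t ≥ 0: w1^(t+1) = w1^(t) + (η/2)*exp(w2^(t) + b2^(t) − w1^(t) − b1^(t)); b1^(t+1) = b1^(t) + (η/2)*exp(w2^(t) + b2^(t) − w1^(t) − b1^(t)); w2^(t+1) = w2^(t) − (η/2)*exp(w2^(t) − b2^(t)) − (η/2)*exp(w2^(t) + b2^(t) − w1^(t) − b1^(t)); b2^(t+1) = b2^(t) + (η/2)*exp(w2^(t) − b2^(t)) − (η/2)*exp(w2^(t) + b2^(t) − w1^(t) − b1^(t)). Write uj^(t) = wj^(t) + bj^(t). Then u1^(t) + u2^(t) = u1^(0) + u2^(0) for all t, and there exists T ≥ 0 such that u2^(T) < 0 (so if w2^(T) < 0, the breakpoint −b2^(T)/w2^(T) < 1). -/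
/-- in the regime where the second neuron is active on both
instances and the first only on `x2`, the quantity `u1 + u2` (with
`uj = wj + bj`) is conserved, and after finitely many iterations `u2 < 0`. -/
theorem stmt_12 (η : ℝ) (hη : 0 < η) (w1 b1 w2 b2 : ℕ → ℝ)
    (h1 : ∀ t : ℕ, w1 (t+1) = w1 t
      + η/2 * Real.exp (w2 t + b2 t - w1 t - b1 t))
    (h2 : ∀ t : ℕ, b1 (t+1) = b1 t
      + η/2 * Real.exp (w2 t + b2 t - w1 t - b1 t))
    (h3 : ∀ t : ℕ, w2 (t+1) = w2 t
      - η/2 * Real.exp (w2 t - b2 t)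
      - η/2 * Real.exp (w2 t + b2 t - w1 t - b1 t))
    (h4 : ∀ t : ℕ, b2 (t+1) = b2 t
      + η/2 * Real.exp (w2 t - b2 t)
      - η/2 * Real.exp (w2 t + b2 t - w1 t - b1 t)) :
    (∀ t : ℕ, (w1 t + b1 t) + (w2 t + b2 t) = (w1 0 + b1 0) + (w2 0 + b2 0)) ∧
    ∃ T : ℕ, w2 T + b2 T < 0 ∧ (w2 T < 0 → -(b2 T) / w2 T < 1) := by
  set C : ℝ := (w1 0 + b1 0) + (w2 0 + b2 0) with hC
  have hcons : ∀ t : ℕ, (w1 t + b1 t) + (w2 t + b2 t) = C := by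
    intro t
    induction t with
    | zero => rfl
    | succ n ih =>
      have e1 := h1 n; have e2 := h2 n; have e3 := h3 n; have e4 := h4 n
      linarith
  refine ⟨hcons, ?_⟩
  -- first find T with u2 T < 0
  have hT : ∃ T : ℕ, w2 T + b2 T < 0 := by
    by_contra hcon
    push_neg at hcon
    set ε : ℝ := η * Real.exp (-C) with hε
    have hεpos : 0 < ε := mul_pos hη (Real.exp_pos _)
    have hdec : ∀ n : ℕ, w2 n + b2 n ≤ w2 0 + b2 0 - n * ε := by
      intro n
      induction n with
      | zero => simp
      | succ m ih =>
        have hstep : w2 (m+1) + b2 (m+1)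
            = w2 m + b2 m - η * Real.exp (w2 m + b2 m - w1 m - b1 m) := by
          have e3 := h3 m; have e4 := h4 m; linarith
        have harg : -C ≤ w2 m + b2 m - w1 m - b1 m := by
          have := hcons m
          have := hcon m
          linarith
        have hexp : Real.exp (-C) ≤ Real.exp (w2 m + b2 m - w1 m - b1 m) :=
          Real.exp_le_exp.mpr harg
        have : η * Real.exp (-C) ≤ η * Real.exp (w2 m + b2 m - w1 m - b1 m) :=
          mul_le_mul_of_nonneg_left hexp hη.le
        rw [hstep]
        push_cast
        nlinarith
    obtain ⟨n, hn⟩ := exists_nat_gt ((w2 0 + b2 0) / ε)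
    have : w2 0 + b2 0 < n * ε := (div_lt_iff₀ hεpos).mp hn
    have := hdec n
    have := hcon n
    linarith
  obtain ⟨T, hTneg⟩ := hT
  refine ⟨T, hTneg, fun hw => ?_⟩
  have hnum : 0 < -(w2 T + b2 T) := by linarith
  have : -(b2 T) / w2 T - 1 = (-(w2 T + b2 T)) / w2 T := by
    rw [neg_add, add_div, neg_div (w2 T) (w2 T), div_self (ne_of_lt hw)]
    ring
  have hlt : (-(w2 T + b2 T)) / w2 T < 0 := div_neg_of_pos_of_neg hnum hw
  linarith [this ▸ hlt]
end

section
/- Let η > 0 and let (w1^(t), b1^(t), w2^(t), b2^(t)) be real sequences satisfying for all t ≥ 0: w1^(t+1) = w1^(t) + (η/2)*exp(w2^(t) + b2^(t) − w1^(t) − b1^(t)); b1^(t+1) = b1^(t) + (η/2)*exp(w2^(t) + b2^(t) − w1^(t) − b1^(t)); w2^(t+1) = w2^(t) − (η/2)*exp(w2^(t) − b2^(t)) − (η/2)*exp(w2^(t) + b2^(t) − w1^(t) − b1^(t)); b2^(t+1) = b2^(t) + (η/2)*exp(w2^(t) − b2^(t)) − (η/2)*exp(w2^(t) + b2^(t)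 − w1^(t) − b1^(t)). Suppose w2^(0) > 0. Then there exists T ≥ 0 such that w2^(T) < 0, i.e., the second weight changes sign after finitely many iterations. -/
/-- in the regime where both neurons are right-active, the second
neuron is active on both instances and the first only on `x2`, the second
weight changes sign after finitely many iterations. -/
theorem stmt_13 (η : ℝ) (hη : 0 < η) (w1 b1 w2 b2 : ℕ → ℝ)
    (h1 : ∀ t : ℕ, w1 (t+1) = w1 t
      + η/2 * Real.exp (w2 t + b2 t - w1 t - b1 t))
    (h2 : ∀ t : ℕ, b1 (t+1) = b1 t
      + η/2 * Real.exp (w2 t + b2 t - w1 t - b1 t))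
    (h3 : ∀ t : ℕ, w2 (t+1) = w2 t
      - η/2 * Real.exp (w2 t - b2 t)
      - η/2 * Real.exp (w2 t + b2 t - w1 t - b1 t))
    (h4 : ∀ t : ℕ, b2 (t+1) = b2 t
      + η/2 * Real.exp (w2 t - b2 t)
      - η/2 * Real.exp (w2 t + b2 t - w1 t - b1 t))
    (hw2 : 0 < w2 0) :
    ∃ T : ℕ, w2 T < 0 := by
  obtain ⟨u, hu⟩ : ∃ u : ℕ → ℝ, ∀ t, u t = w2 t - b2 t :=
    ⟨fun t => w2 t - b2 t, fun _ => rfl⟩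
  have hustep : ∀ t, u (t+1) = u t - η * Real.exp (u t) := by
    intro t
    simp only [hu]
    rw [h3, h4]
    ring
  have hw2step : ∀ t, w2 (t+1) ≤ w2 t + (u (t+1) - u t) / 2 := by
    intro t
    rw [h3, hustep, hu]
    have := Real.exp_pos (w2 t + b2 t - w1 t - b1 t)
    nlinarith
  have key : ∀ T, w2 T ≤ w2 0 + (u T - u 0) / 2 := by
    intro T
    induction T with
    | zero => simp
    | succ n ih => have := hw2step n; linarith
  have hex : ∃ T, u T < u 0 - 2 * w2 0 := by
    by_contra h
    push_neg at h
    set L := u 0 - 2 * w2 0 with hL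
    have hdec : ∀ t : ℕ, u t ≤ u 0 - t * (η * Real.exp L) := by
      intro t
      induction t with
      | zero => simp
      | succ n ih =>
        have h1 : Real.exp L ≤ Real.exp (u n) := Real.exp_le_exp.2 (h n)
        have h2 := hustep n
        have h3 : η * Real.exp L ≤ η * Real.exp (u n) :=
          mul_le_mul_of_nonneg_left h1 hη.le
        push_cast
        push_cast at ih
        linarith
    obtain ⟨T, hT⟩ := exists_nat_gt ((2 * w2 0) / (η * Real.exp L))
    have hpos : 0 < η * Real.exp L := mul_pos hη (Real.exp_pos _)
    have h2' : 2 * w2 0 < T * (η * Real.exp L) := by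
      rwa [div_lt_iff₀ hpos] at hT
    have := hdec T
    have := h T
    linarith
  obtain ⟨T, hT⟩ := hex
  exact ⟨T, by have hk := key T; linarith⟩
end

section
/- Let η > 0 and let (w1^(t), b1^(t), w2^(t), b2^(t)) be real sequences satisfying for all t ≥ 0, with A_t = exp(−w1^(t) + b1^(t) + w2^(t) − b2^(t)) and B_t = exp(−w1^(t) − b1^(t) + w2^(t) + b2^(t)): w1^(t+1) = w1^(t) + (η/2)*(A_t + B_t); b1^(t+1) = b1^(t) − (η/2)*A_t + (η/2)*B_t; w2^(t+1) = w2^(t) − (η/2)*(A_t + B_t); b2^(t+1) = b2^(t) + (η/2)*A_t − (η/2)*B_t. Suppose moreover that b1^(0) > |w1^(0)|. Then w1^(t) + w2^(t) = w1^(0) + w2^(0) and b1^(t) + b2^(t) = b1^(0) + b2^(0) for all t, and there exists T ≥ 0 such that w1^(T) − b1^(T) ≥ 0. -/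
/-- in the regime where both neurons are active on both
instances, the sums `w1 + w2` and `b1 + b2` are conserved, and starting from
`b1⁰ > |w1⁰|`, after finitely many iterations `w1 - b1 ≥ 0`. -/
theorem stmt_14 (η : ℝ) (hη : 0 < η) (w1 b1 w2 b2 : ℕ → ℝ)
    (h1 : ∀ t : ℕ, w1 (t+1) = w1 t
      + η/2 * (Real.exp (-(w1 t) + b1 t + w2 t - b2 t)
        + Real.exp (-(w1 t) - b1 t + w2 t + b2 t)))
    (h2 : ∀ t : ℕ, b1 (t+1) = b1 t
      - η/2 * Real.exp (-(w1 t) + b1 t + w2 t - b2 t)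
      + η/2 * Real.exp (-(w1 t) - b1 t + w2 t + b2 t))
    (h3 : ∀ t : ℕ, w2 (t+1) = w2 t
      - η/2 * (Real.exp (-(w1 t) + b1 t + w2 t - b2 t)
        + Real.exp (-(w1 t) - b1 t + w2 t + b2 t)))
    (h4 : ∀ t : ℕ, b2 (t+1) = b2 t
      + η/2 * Real.exp (-(w1 t) + b1 t + w2 t - b2 t)
      - η/2 * Real.exp (-(w1 t) - b1 t + w2 t + b2 t))
    (hb1 : |w1 0| < b1 0) :
    (∀ t : ℕ, w1 t + w2 t = w1 0 + w2 0) ∧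
    (∀ t : ℕ, b1 t + b2 t = b1 0 + b2 0) ∧
    ∃ T : ℕ, 0 ≤ w1 T - b1 T := by
  have hw : ∀ t : ℕ, w1 t + w2 t = w1 0 + w2 0 := by
    intro t
    induction t with
    | zero => rfl
    | succ n ih => rw [h1 n, h3 n]; linarith
  have hb : ∀ t : ℕ, b1 t + b2 t = b1 0 + b2 0 := by
    intro t
    induction t with
    | zero => rfl
    | succ n ih => rw [h2 n, h4 n]; linarith
  refine ⟨hw, hb, ?_⟩
  -- u t = w1 t - b1 t, s t = w2 t - b2 t; u + s conserved; u(t+1) = u t + η exp(s t - u t)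
  have hstep : ∀ t : ℕ, w1 (t+1) - b1 (t+1)
      = w1 t - b1 t + η * Real.exp (-(w1 t) + b1 t + w2 t - b2 t) := by
    intro t; rw [h1 t, h2 t]; ring
  have hcons : ∀ t : ℕ, (w2 t - b2 t) - (w1 t - b1 t)
      = (w2 0 - b2 0) - (w1 0 - b1 0) - 2 * (w1 t - b1 t) + 2 * (w1 0 - b1 0) := by
    intro t
    have := hw t; have := hb t; linarith
  by_contra hcon
  push_neg at hcon
  have hlt : ∀ T : ℕ, w1 T - b1 T < 0 := hcon
  set C : ℝ := (w2 0 - b2 0) + (w1 0 - b1 0) with hC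
  have key : ∀ t : ℕ, w1 0 - b1 0 + t * (η * Real.exp C) ≤ w1 t - b1 t := by
    intro t
    induction t with
    | zero => simp
    | succ n ih =>
      have h1lt := hlt n
      have harg : C ≤ -(w1 n) + b1 n + w2 n - b2 n := by
        have := hw n; have := hb n; linarith
      have hexp : Real.exp C ≤ Real.exp (-(w1 n) + b1 n + w2 n - b2 n) :=
        Real.exp_le_exp.mpr harg
      have := hstep n
      have hmul : η * Real.exp C ≤ η * Real.exp (-(w1 n) + b1 n + w2 n - b2 n) :=
        mul_le_mul_of_nonneg_left hexp hη.le
      push_cast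
      linarith
  have hc : 0 < η * Real.exp C := mul_pos hη (Real.exp_pos C)
  obtain ⟨T, hT⟩ := exists_nat_gt ((b1 0 - w1 0) / (η * Real.exp C))
  have : b1 0 - w1 0 < T * (η * Real.exp C) := by
    rw [div_lt_iff₀ hc] at hT; linarith
  have := key T
  have := hlt T
  linarith
end

section
/- Fix a step size η ∈ (0, 0.3] and an initialization with w1^(0) ∈ (2.7, 3), w2^(0) ∈ (−0.5, 0), and b1^(0) = b2^(0) = 0. Define the gradient descent iterates θ^(t+1) = θ^(t) − η*∇L(θ^(t)) (L is differentiable at every iterate), and let x*(t) = (b2^(t) − b1^(t))/(w1^(t) − w2^(t)). Then for all t ≥ 7/η: x*(t) ≥ 1/(25 + 5*ln(1 + 4*η*t)). -/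
open Real

noncomputable def expStep (η u : ℝ) : ℝ := u + η * exp (-u)

section expStep

variable {η u : ℝ}

lemma le_expStep (hη : 0 ≤ η) : u ≤ expStep η u :=
  le_add_of_nonneg_right (by positivity)

lemma exp_add_le_exp_expStep : exp u + η ≤ exp (expStep η u) := by
  rw [expStep, exp_add]
  calc exp u + η = exp u * (η * exp (-u) + 1) := by rw [exp_neg]; field_simp; ring
    _ ≤ exp u * exp (η * exp (-u)) := by gcongr; exact add_one_le_exp _

lemma exp_le_one_add_ten_sevenths_mul {x : ℝ} (hx : 0 ≤ x) (hx' : x ≤ 0.3) :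
    exp x ≤ 1 + 10 / 7 * x := by
  calc exp x ≤ 1 / (1 - x) := exp_bound_div_one_sub_of_interval hx (by linarith)
    _ ≤ 1 + 10 / 7 * x := by rw [div_le_iff₀ (by linarith)]; nlinarith

lemma exp_expStep_le (hu : 0 ≤ u) (hη : 0 ≤ η) (hη' : η ≤ 0.3) :
    exp (expStep η u) ≤ exp u + 10 / 7 * η := by
  have hx : η * exp (-u) ≤ 0.3 :=
    (mul_le_of_le_one_right hη (exp_le_one_iff.2 (neg_nonpos.2 hu))).trans hη'
  rw [expStep, exp_add]
  calc exp u * exp (η * exp (-u)) ≤ exp u * (1 + 10 / 7 * (η * exp (-u))) := by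
        gcongr; exact exp_le_one_add_ten_sevenths_mul (by positivity) hx
    _ = exp u + 10 / 7 * η := by rw [exp_neg]; field_simp

lemma le_iterate_expStep (hη : 0 ≤ η) (n : ℕ) : u ≤ (expStep η)^[n] u := by
  induction n with
  | zero => rfl
  | succ n ih => rw [Function.iterate_succ_apply']; exact ih.trans (le_expStep hη)

lemma exp_add_mul_le_exp_iterate_expStep (n : ℕ) :
    exp u + η * n ≤ exp ((expStep η)^[n] u) := by
  induction n with
  | zero => simp
  | succ n ih =>
    rw [Function.iterate_succ_apply']
    push_cast
    linarith [exp_add_le_exp_expStep (η := η) (u := (expStep η)^[n] u)]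

lemma exp_iterate_expStep_le (hu : 0 ≤ u) (hη : 0 ≤ η) (hη' : η ≤ 0.3) (n : ℕ) :
    exp ((expStep η)^[n] u) ≤ exp u + 10 / 7 * (η * n) := by
  induction n with
  | zero => simp
  | succ n ih =>
    rw [Function.iterate_succ_apply']
    push_cast
    linarith [exp_expStep_le (hu.trans (le_iterate_expStep hη n)) hη hη']

end expStep

def activeRegion : Set (EuclideanSpace ℝ (Fin 4)) :=
  {θ | θ 1 < θ 0 ∧ 0 < θ 0 + θ 1 ∧ θ 2 < θ 3 ∧ θ 2 + θ 3 < 0}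

lemma isOpen_activeRegion : IsOpen activeRegion := by
  simp only [activeRegion, Set.ofPred_and]
  refine (isOpen_lt ?_ ?_).inter
    ((isOpen_lt ?_ ?_).inter ((isOpen_lt ?_ ?_).inter (isOpen_lt ?_ ?_))) <;> fun_prop

noncomputable def lossModel (θ : EuclideanSpace ℝ (Fin 4)) : ℝ :=
  (1/2) * exp (-(θ 0 + θ 1)) + (1/2) * exp (θ 2 - θ 3)

noncomputable def lossModelGrad (θ : EuclideanSpace ℝ (Fin 4)) : EuclideanSpace ℝ (Fin 4) :=
  !₂[-(1/2) * exp (-(θ 0 + θ 1)), -(1/2) * exp (-(θ 0 + θ 1)),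
    (1/2) * exp (θ 2 - θ 3), -(1/2) * exp (θ 2 - θ 3)]

lemma loss_eqOn_activeRegion : Set.EqOn Loss lossModel activeRegion := by
  rintro θ ⟨h1, h2, h3, h4⟩
  have m1 : max 0 (θ 0 * (-1) + θ 1) = 0 := max_eq_left (by linarith)
  have m2 : max 0 (θ 2 * (-1) + θ 3) = θ 3 - θ 2 := by rw [max_eq_right] <;> linarith
  have m3 : max 0 (θ 0 * 1 + θ 1) = θ 0 + θ 1 := by rw [max_eq_right] <;> linarith
  have m4 : max 0 (θ 2 * 1 + θ 3) = 0 := max_eq_left (by linarith)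
  simp only [Loss, Phi, lossModel, m1, m2, m3, m4]
  ring_nf

lemma hasGradientAt_lossModel (θ : EuclideanSpace ℝ (Fin 4)) :
    HasGradientAt lossModel (lossModelGrad θ) θ := by
  rw [hasGradientAt_iff_hasFDerivAt]
  let p (i : Fin 4) : EuclideanSpace ℝ (Fin 4) →L[ℝ] ℝ := EuclideanSpace.proj i
  have hp (i : Fin 4) : HasFDerivAt (fun θ' : EuclideanSpace ℝ (Fin 4) => θ' i) (p i) θ :=
    (p i).hasFDerivAt
  have hA := (((hp 0).add (hp 1)).neg.exp).const_mul (1/2 : ℝ)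
  have hC := (((hp 2).sub (hp 3)).exp).const_mul (1/2 : ℝ)
  refine (hA.add hC).congr_fderiv (ContinuousLinearMap.ext fun v => ?_)
  simp [p, lossModelGrad, PiLp.inner_apply, Fin.sum_univ_four]
  ring

lemma hasGradientAt_loss {θ : EuclideanSpace ℝ (Fin 4)} (hθ : θ ∈ activeRegion) :
    HasGradientAt Loss (lossModelGrad θ) θ := by
  rw [hasGradientAt_iff_hasFDerivAt]
  exact (hasGradientAt_iff_hasFDerivAt.1 (hasGradientAt_lossModel θ)).congr_of_eventuallyEq
    (loss_eqOn_activeRegion.eventuallyEq_of_mem (isOpen_activeRegion.mem_nhds hθ))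

/-- The parameters with margins `w1 + b1 = A`, `b2 - w2 = C` and conserved quantities
`w1 - b1 = a`, `w2 + b2 = -c`. -/
noncomputable def planePoint (a c A C : ℝ) : EuclideanSpace ℝ (Fin 4) :=
  !₂[(A + a) / 2, (A - a) / 2, -(C + c) / 2, (C - c) / 2]

section planePoint

variable {a c A C : ℝ}

lemma planePoint_mem_activeRegion (ha : 0 < a) (hc : 0 < c) (hA : 0 < A) (hC : 0 < C) :
    planePoint a c A C ∈ activeRegion := by
  simp only [activeRegion, planePoint, Set.mem_ofPred_eq, Matrix.cons_val]
  refine ⟨?_, ?_, ?_, ?_⟩ <;> linarith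

lemma eq_planePoint_of_bias_eq_zero {θ : EuclideanSpace ℝ (Fin 4)} (h1 : θ 1 = 0) (h3 : θ 3 = 0) :
    θ = planePoint (θ 0) (-θ 2) (θ 0) (-θ 2) := by
  ext i
  fin_cases i <;> simp [planePoint, h1, h3]

lemma planePoint_sub_smul_gradient_loss (η : ℝ) (ha : 0 < a) (hc : 0 < c) (hA : 0 < A)
    (hC : 0 < C) :
    planePoint a c A C - η • gradient Loss (planePoint a c A C) =
      planePoint a c (expStep η A) (expStep η C) := by
  rw [(hasGradientAt_loss (planePoint_mem_activeRegion ha hc hA hC)).gradient]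
  ext i
  fin_cases i <;> simp [planePoint, lossModelGrad, expStep] <;> ring_nf

lemma planePoint_threshold :
    (planePoint a c A C 3 - planePoint a c A C 1) /
        (planePoint a c A C 0 - planePoint a c A C 2) =
      (C - c - (A - a)) / (A + C + a + c) := by
  simp only [planePoint, PiLp.toLp_apply, Matrix.cons_val]
  rw [← div_div_div_cancel_right₀ (two_ne_zero' ℝ) (C - c - (A - a))]
  congr 1 <;> ring

end planePoint

lemma gd_eq_planePoint {η a c : ℝ} (hη : 0 ≤ η) (ha : 0 < a) (hc : 0 < c)
    {θ : ℕ → EuclideanSpace ℝ (Fin 4)} (h0 : θ 0 = planePoint a c a c)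
    (hstep : ∀ t : ℕ, θ (t + 1) = θ t - η • gradient Loss (θ t)) (t : ℕ) :
    θ t = planePoint a c ((expStep η)^[t] a) ((expStep η)^[t] c) := by
  induction t with
  | zero => exact h0
  | succ t ih =>
    rw [hstep, ih, planePoint_sub_smul_gradient_loss η ha hc
      (ha.trans_le (le_iterate_expStep hη t)) (hc.trans_le (le_iterate_expStep hη t)),
      Function.iterate_succ_apply', Function.iterate_succ_apply']

lemma log_exp_add {u s : ℝ} (hs : 0 ≤ s) : log (exp u + s) = u + log (1 + exp (-u) * s) := by
  rw [← log_exp u, ← log_mul (exp_ne_zero u) (by positivity), log_exp, mul_add, mul_one,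
    ← mul_assoc, ← exp_add, add_neg_cancel, exp_zero, one_mul]

lemma le_add_log_of_exp_le {u M s : ℝ} (hM : 0 ≤ M) (hs : 0 ≤ s)
    (h : exp u ≤ exp M + 10 / 7 * s) : u ≤ M + log (1 + 4 * s) := by
  rw [← exp_le_exp, exp_add, exp_log (by linarith)]
  nlinarith [one_le_exp hM]

lemma three_fifths_le_exp_neg {c : ℝ} (hc : c < 1 / 2) : 3 / 5 ≤ exp (-c) := by
  have h : exp c ^ 2 < (5 / 3) ^ 2 := by
    rw [← exp_nat_mul]
    calc exp ((2 : ℕ) * c) ≤ exp 1 := exp_le_exp.2 (by push_cast; linarith)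
      _ < (5 / 3) ^ 2 := by linarith [exp_one_lt_d9]
  have h' := (pow_lt_pow_iff_left₀ (exp_pos c).le (by norm_num) two_ne_zero).1 h
  rw [exp_neg, le_inv_comm₀ (by norm_num) (exp_pos c)]
  linarith

lemma exp_neg_le_two_div_25 {a : ℝ} (ha : 2.7 < a) : exp (-a) ≤ 2 / 25 := by
  have h : (25 / 2 : ℝ) ≤ exp 2.7 := by
    refine le_trans ?_ (sum_le_exp_of_nonneg (by norm_num) 5)
    simp [Finset.sum_range_succ, Nat.factorial]
    norm_num
  rw [exp_neg, inv_le_comm₀ (exp_pos a) (by norm_num)]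
  linarith [exp_le_exp.2 ha.le]

lemma one_add_log_le_log {s : ℝ} (hs : 7 ≤ s) :
    1 + log (1 + 4 / 35 * s) ≤ log (1 + 3 / 5 * s) := by
  have h : exp 1 * (1 + 4 / 35 * s) ≤ 1 + 3 / 5 * s := by nlinarith [exp_one_lt_d9]
  have := log_le_log (by positivity) h
  rwa [log_mul (exp_ne_zero 1) (by positivity), log_exp] at this

lemma threshold_lower_bound {a c A C s : ℝ} (ha : a ∈ Set.Ioo (2.7 : ℝ) 3)
    (hc : c ∈ Set.Ioo (0 : ℝ) (1 / 2)) (hs : 7 ≤ s) (hA : a ≤ A)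
    (hA' : exp A ≤ exp a + 10 / 7 * s) (hC : exp c + s ≤ exp C)
    (hC' : exp C ≤ exp c + 10 / 7 * s) :
    1 / (25 + 5 * log (1 + 4 * s)) ≤ (C - c - (A - a)) / (A + C + a + c) := by
  obtain ⟨ha₁, ha₂⟩ := ha
  obtain ⟨hc₀, hc₁⟩ := hc
  have hC₀ : log (1 + 3 / 5 * s) ≤ C - c := calc
    log (1 + 3 / 5 * s) ≤ log (1 + exp (-c) * s) :=
      log_le_log (by positivity) (by nlinarith [three_fifths_le_exp_neg hc₁])
    _ = log (exp c + s) - c := by rw [log_exp_add (by linarith)]; ring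
    _ ≤ C - c := by gcongr; exact (log_le_iff_le_exp (by positivity)).2 hC
  have hA₀ : A - a ≤ log (1 + 4 / 35 * s) := calc
    A - a ≤ log (exp a + 10 / 7 * s) - a := by
      gcongr; exact (le_log_iff_exp_le (by positivity)).2 hA'
    _ = log (1 + exp (-a) * (10 / 7 * s)) := by rw [log_exp_add (by linarith)]; ring
    _ ≤ log (1 + 4 / 35 * s) :=
      log_le_log (by positivity) (by nlinarith [exp_neg_le_two_div_25 ha₁, exp_pos (-a)])
  have hnum : 1 ≤ C - c - (A - a) := by linarith [one_add_log_le_log hs]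
  have hA₁ : A ≤ 3 + log (1 + 4 * s) :=
    le_add_log_of_exp_le (by norm_num) (by linarith) (hA'.trans (by gcongr))
  have hC₁ : C ≤ 3 + log (1 + 4 * s) :=
    le_add_log_of_exp_le (by norm_num) (by linarith) (hC'.trans (by gcongr; linarith))
  have hden : A + C + a + c ≤ 25 + 5 * log (1 + 4 * s) := by
    linarith [log_nonneg (by linarith : (1 : ℝ) ≤ 1 + 4 * s)]
  have hpos : 0 < A + C + a + c := by linarith
  calc 1 / (25 + 5 * log (1 + 4 * s)) ≤ 1 / (A + C + a + c) := one_div_le_one_div_of_le hpos hden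
    _ ≤ _ := div_le_div_of_nonneg_right hnum hpos.le

/-- non-asymptotic lower bound on the decision threshold
`x*(t) = (b2 - b1)/(w1 - w2)` of gradient descent with `η ∈ (0, 0.3]`,
`w1⁰ ∈ (2.7, 3)`, `w2⁰ ∈ (-0.5, 0)` and zero biases, valid for `t ≥ 7/η`. -/
theorem stmt_16 (η : ℝ) (hη : η ∈ Set.Ioc (0:ℝ) 0.3)
    (θ : ℕ → EuclideanSpace ℝ (Fin 4))
    (hw1 : θ 0 0 ∈ Set.Ioo (2.7:ℝ) 3) (hw2 : θ 0 2 ∈ Set.Ioo (-0.5:ℝ) 0)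
    (hb1 : θ 0 1 = 0) (hb2 : θ 0 3 = 0)
    (hstep : ∀ t : ℕ, θ (t+1) = θ t - η • gradient Loss (θ t)) :
    (∀ t : ℕ, DifferentiableAt ℝ Loss (θ t)) ∧
    ∀ t : ℕ, 7 / η ≤ (t : ℝ) →
      1 / (25 + 5 * Real.log (1 + 4 * η * t)) ≤
        (θ t 3 - θ t 1) / (θ t 0 - θ t 2) := by
  obtain ⟨hη₀, hη₁⟩ := hη
  have ha : 0 < θ 0 0 := by linarith [hw1.1]
  have hc : 0 < -θ 0 2 := by linarith [hw2.2]
  have horbit := gd_eq_planePoint hη₀.le ha hc (eq_planePoint_of_bias_eq_zero hb1 hb2) hstep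
  have hA (t : ℕ) := le_iterate_expStep hη₀.le t (u := θ 0 0)
  have hC (t : ℕ) := le_iterate_expStep hη₀.le t (u := -θ 0 2)
  refine ⟨fun t => ?_, fun t ht => ?_⟩
  · rw [horbit t]
    exact (hasGradientAt_loss (planePoint_mem_activeRegion ha hc
      (ha.trans_le (hA t)) (hc.trans_le (hC t)))).differentiableAt
  · have hs : 7 ≤ η * t := by rwa [div_le_iff₀ hη₀, mul_comm] at ht
    rw [horbit t, planePoint_threshold, mul_assoc]
    exact threshold_lower_bound hw1 ⟨hc, by linarith [hw2.1]⟩ hs (hA t)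
      (exp_iterate_expStep_le ha.le hη₀.le hη₁ t) (exp_add_mul_le_exp_iterate_expStep t)
      (exp_iterate_expStep_le hc.le hη₀.le hη₁ t)
end

section
/- Let η > 0 and let (w1^(t), b1^(t), w2^(t), b2^(t)) follow the specialized update rules, with initialization satisfying b1^(0) = b2^(0) = 0, w1^(0) ∈ (0, 3), and w2^(0) ∈ (−2, 0). Then for all t ≥ 0: w1^(t) − w2^(t) ≤ 5 + ln(1 + 2*exp(η)*η*t). -/
private lemma key_step (η x : ℝ) (hη : 0 < η) (hx : 0 ≤ x) :
    Real.exp (x + η * Real.exp (-x)) ≤ Real.exp x + η * Real.exp η := by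
  set y := η * Real.exp (-x) with hy
  have hy0 : 0 ≤ y := le_of_lt (mul_pos hη (Real.exp_pos _))
  have hyη : y ≤ η := by
    have : Real.exp (-x) ≤ 1 := Real.exp_le_one_iff.mpr (by linarith)
    nlinarith [hη.le]
  have h1 : Real.exp y ≤ 1 + y * Real.exp y := by
    have hone : Real.exp (-y) * Real.exp y = 1 := by rw [← Real.exp_add]; simp
    have h := mul_le_mul_of_nonneg_right (Real.add_one_le_exp (-y)) (Real.exp_pos y).le
    nlinarith
  have h2 : Real.exp y ≤ Real.exp η := Real.exp_le_exp.mpr hyη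
  have hxy : Real.exp (x + y) = Real.exp x * Real.exp y := Real.exp_add x y
  have hxx : Real.exp x * Real.exp (-x) = 1 := by
    rw [← Real.exp_add]; simp
  calc Real.exp (x + y) = Real.exp x * Real.exp y := hxy
    _ ≤ Real.exp x * (1 + y * Real.exp y) := by
        nlinarith [Real.exp_pos x]
    _ = Real.exp x + η * (Real.exp x * Real.exp (-x)) * Real.exp y := by ring
    _ = Real.exp x + η * Real.exp y := by rw [hxx]; ring
    _ ≤ Real.exp x + η * Real.exp η := by nlinarith

private lemma growth (η : ℝ) (hη : 0 < η) (u : ℕ → ℝ) (hu0 : 0 ≤ u 0)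
    (hrec : ∀ t, u (t+1) = u t + η * Real.exp (-(u t))) :
    ∀ t, 0 ≤ u t ∧ Real.exp (u t) ≤ Real.exp (u 0) + η * Real.exp η * t := by
  intro t
  induction t with
  | zero => simp [hu0]
  | succ n ih =>
    obtain ⟨hpos, hbd⟩ := ih
    constructor
    · rw [hrec n]
      have := mul_pos hη (Real.exp_pos (-(u n)))
      linarith
    · rw [hrec n]
      have := key_step η (u n) hη hpos
      push_cast
      have hpos' : 0 < η * Real.exp η := mul_pos hη (Real.exp_pos _)
      calc Real.exp (u n + η * Real.exp (-(u n))) ≤ Real.exp (u n) + η * Real.exp η := this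
        _ ≤ Real.exp (u 0) + η * Real.exp η * n + η * Real.exp η := by linarith
        _ = Real.exp (u 0) + η * Real.exp η * (n + 1) := by ring

/-- explicit upper bound on `w1 - w2` under the specialized
update rules with zero biases at initialization, `w1⁰ ∈ (0,3)` and
`w2⁰ ∈ (-2,0)`. -/
theorem stmt_17 (η : ℝ) (hη : 0 < η) (w1 b1 w2 b2 : ℕ → ℝ)
    (h1 : ∀ t : ℕ, w1 (t+1) = w1 t + η/2 * Real.exp (-(w1 t) - b1 t))
    (h2 : ∀ t : ℕ, b1 (t+1) = b1 t + η/2 * Real.exp (-(w1 t) - b1 t))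
    (h3 : ∀ t : ℕ, w2 (t+1) = w2 t - η/2 * Real.exp (w2 t - b2 t))
    (h4 : ∀ t : ℕ, b2 (t+1) = b2 t + η/2 * Real.exp (w2 t - b2 t))
    (hb1 : b1 0 = 0) (hb2 : b2 0 = 0)
    (hw1 : w1 0 ∈ Set.Ioo (0:ℝ) 3) (hw2 : w2 0 ∈ Set.Ioo (-2:ℝ) 0) :
    ∀ t : ℕ, w1 t - w2 t ≤ 5 + Real.log (1 + 2 * Real.exp η * η * t) := by
  obtain ⟨hw1a, hw1b⟩ := hw1
  obtain ⟨hw2a, hw2b⟩ := hw2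
  -- u = w1 + b1, s = -(w2 - b2)
  set u : ℕ → ℝ := fun t => w1 t + b1 t with hu
  set s : ℕ → ℝ := fun t => -(w2 t - b2 t) with hs
  have hurec : ∀ t, u (t+1) = u t + η * Real.exp (-(u t)) := by
    intro t
    simp only [hu, h1 t, h2 t]
    have : -(w1 t) - b1 t = -(w1 t + b1 t) := by ring
    rw [this]; ring
  have hsrec : ∀ t, s (t+1) = s t + η * Real.exp (-(s t)) := by
    intro t
    simp only [hs, h3 t, h4 t]
    have : w2 t - b2 t = -(-(w2 t - b2 t)) := by ring
    rw [this]; ring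
  have hu0 : u 0 = w1 0 := by simp [hu, hb1]
  have hs0 : s 0 = -(w2 0) := by simp [hs, hb2]
  -- conserved quantities
  have hc1 : ∀ t, w1 t - b1 t = w1 0 := by
    intro t
    induction t with
    | zero => simp [hb1]
    | succ n ih => rw [h1 n, h2 n]; linarith
  have hc2 : ∀ t, w2 t + b2 t = w2 0 := by
    intro t
    induction t with
    | zero => simp [hb2]
    | succ n ih => rw [h3 n, h4 n]; linarith
  have hU := growth η hη u (by rw [hu0]; linarith) hurec
  have hS := growth η hη s (by rw [hs0]; linarith) hsrec
  intro t
  obtain ⟨hupos, hubd⟩ := hU t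
  obtain ⟨hspos, hsbd⟩ := hS t
  set a : ℝ := η * Real.exp η * t with ha
  have ha0 : 0 ≤ a := by positivity
  clear_value a
  -- bounds on u t and s t
  have hue : Real.exp (u t) < Real.exp 3 + a := by
    rw [hu0] at hubd
    have : Real.exp (w1 0) < Real.exp 3 := Real.exp_lt_exp.mpr hw1b
    linarith
  have hse : Real.exp (s t) < Real.exp 2 + a := by
    rw [hs0] at hsbd
    have : Real.exp (-(w2 0)) < Real.exp 2 := Real.exp_lt_exp.mpr (by linarith)
    linarith
  -- key product inequality
  have hprod : (Real.exp 3 + a) * (Real.exp 2 + a) ≤ Real.exp 5 * (1 + 2*a)^2 := by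
    have h32 : Real.exp 5 = Real.exp 3 * Real.exp 2 := by rw [← Real.exp_add]; norm_num
    have e2 : Real.exp 2 ≤ Real.exp 5 := Real.exp_le_exp.mpr (by norm_num)
    have e3 : Real.exp 3 ≤ Real.exp 5 := Real.exp_le_exp.mpr (by norm_num)
    have e1 : (1:ℝ) ≤ Real.exp 5 := by
      have := Real.add_one_le_exp (5:ℝ); linarith
    nlinarith [sq_nonneg a, mul_nonneg ha0 ha0]
  -- now conclude
  have hexpsum : Real.exp (u t + s t) < Real.exp 5 * (1 + 2*a)^2 := by
    rw [Real.exp_add]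
    calc Real.exp (u t) * Real.exp (s t) < (Real.exp 3 + a) * (Real.exp 2 + a) := by
          nlinarith [Real.exp_pos (u t), Real.exp_pos (s t)]
      _ ≤ Real.exp 5 * (1 + 2*a)^2 := hprod
  have h12a : (0:ℝ) < 1 + 2*a := by linarith
  have hexp2 : Real.exp (2 * Real.log (1 + 2*a)) = (1 + 2*a)^2 := by
    rw [show (2:ℝ) * Real.log (1 + 2*a) = Real.log ((1+2*a)^2) by
        rw [Real.log_pow]; push_cast; ring,
      Real.exp_log (by positivity)]
  have hlog : u t + s t < 5 + 2 * Real.log (1 + 2*a) := by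
    have h'' : Real.exp (5 + 2 * Real.log (1 + 2*a)) = Real.exp 5 * (1 + 2*a)^2 := by
      rw [Real.exp_add, hexp2]
    have h' : Real.exp (u t + s t) < Real.exp (5 + 2 * Real.log (1 + 2*a)) := by
      rw [h'']; exact hexpsum
    exact Real.exp_lt_exp.mp h' 
  -- express w1 t - w2 t
  have hw1t : w1 t = (u t + w1 0) / 2 := by
    have := hc1 t; simp only [hu]; linarith
  have hw2t : w2 t = (-(s t) + w2 0) / 2 := by
    have := hc2 t; simp only [hs]; linarith
  have : w1 t - w2 t = (u t + s t) / 2 + (w1 0 - w2 0) / 2 := by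
    rw [hw1t, hw2t]; ring
  rw [this]
  have hfin : 2 * Real.exp η * η * t = 2 * a := by rw [ha]; push_cast; ring
  rw [hfin]
  have hd : (w1 0 - w2 0) / 2 ≤ 5/2 := by linarith
  set L := Real.log (1 + 2*a) with hL
  set U := u t with hU2
  set S := s t with hS2
  clear_value L U S
  clear_value u s
  linarith [hlog, hd]
end

section
/- Let η ∈ (0, 1/2] and let (w1^(t), b1^(t), w2^(t), b2^(t)) follow the specialized update rules, with initialization satisfying w1^(0) > 0, w2^(0) < 0, and b1^(0) = b2^(0) = 0. Then the sequence t ↦ w1^(t) + w2^(t) converges monotonically to (w1^(0) + w2^(0))/2, and likewise b2^(t) − b1^(t) converges monotonically to (w1^(0) + w2^(0))/2. -/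
open Filter Real

/-- Monotone convergence of a real sequence `S` to a limit `L`: `S` tends to
`L`, and it approaches `L` monotonically from the side of `S 0`. -/
def MonoConvTo (S : ℕ → ℝ) (L : ℝ) : Prop :=
  Filter.Tendsto S Filter.atTop (nhds L) ∧
  (S 0 ≤ L → ∀ t : ℕ, S t ≤ S (t+1) ∧ S (t+1) ≤ L) ∧
  (L ≤ S 0 → ∀ t : ℕ, S (t+1) ≤ S t ∧ L ≤ S (t+1))

/-- Core lemma: two positive sequences following the same recurrence
`z ↦ z + η exp(-z)` with `x 0 ≥ y 0` have difference nonneg, nonincreasing,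
and tending to 0. -/
lemma aux_core (η : ℝ) (hη0 : 0 < η) (hη : η ≤ 1/2) (x y : ℕ → ℝ)
    (hx : ∀ t, x (t+1) = x t + η * Real.exp (-(x t)))
    (hy : ∀ t, y (t+1) = y t + η * Real.exp (-(y t)))
    (hx0 : 0 < x 0) (hy0 : 0 < y 0) (hxy : y 0 ≤ x 0) :
    (∀ t, 0 ≤ x t - y t) ∧ (∀ t, x (t+1) - y (t+1) ≤ x t - y t) ∧
    Tendsto (fun t => x t - y t) atTop (nhds 0) := by
  have hxpos : ∀ t, 0 < x t := by
    intro t; induction t with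
    | zero => exact hx0
    | succ n ih => rw [hx]; positivity
  have hypos : ∀ t, 0 < y t := by
    intro t; induction t with
    | zero => exact hy0
    | succ n ih => rw [hy]; positivity
  -- y t ≤ x t
  have hle : ∀ t, y t ≤ x t := by
    intro t; induction t with
    | zero => exact hxy
    | succ n ih =>
      rw [hx, hy]
      have h1 : Real.exp (-(y n)) - Real.exp (-(x n)) ≤ (x n - y n) * Real.exp (-(y n)) := by
        have := Real.add_one_le_exp (-(x n - y n))
        have hpos := Real.exp_pos (-(y n))
        have : Real.exp (-(x n)) = Real.exp (-(y n)) * Real.exp (-(x n - y n)) := by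
          rw [← Real.exp_add]; ring_nf
        nlinarith [Real.add_one_le_exp (-(x n - y n))]
      have h2 : Real.exp (-(y n)) ≤ 1 := by
        rw [Real.exp_le_one_iff]; linarith [hypos n]
      have hdn : 0 ≤ Real.exp (-(y n)) - Real.exp (-(x n)) := by
        have : Real.exp (-(x n)) ≤ Real.exp (-(y n)) := Real.exp_le_exp.mpr (by linarith)
        linarith
      have h3 : Real.exp (-(y n)) - Real.exp (-(x n)) ≤ x n - y n := by
        nlinarith
      have h4 : η * (Real.exp (-(y n)) - Real.exp (-(x n))) ≤ (1/2) * (x n - y n) :=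
        mul_le_mul hη h3 hdn (by norm_num)
      linarith
  have hd0 : ∀ t, 0 ≤ x t - y t := fun t => by linarith [hle t]
  -- d nonincreasing
  have hmono : ∀ t, x (t+1) - y (t+1) ≤ x t - y t := by
    intro t
    have : Real.exp (-(x t)) ≤ Real.exp (-(y t)) := by
      apply Real.exp_le_exp.mpr; linarith [hle t]
    rw [hx, hy]; nlinarith
  refine ⟨hd0, hmono, ?_⟩
  -- key decay step: d (t+1) ≤ d t * exp (x t - x (t+1))
  have hstep : ∀ t, x (t+1) - y (t+1) ≤ (x t - y t) * Real.exp (x t - x (t+1)) := by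
    intro t
    have hA : Real.exp (-(x t)) * (1 + (x t - y t)) ≤ Real.exp (-(y t)) := by
      have heq : Real.exp (-(y t)) = Real.exp (-(x t)) * Real.exp (x t - y t) := by
        rw [← Real.exp_add]; ring_nf
      rw [heq]
      have := Real.add_one_le_exp (x t - y t)
      nlinarith [Real.exp_pos (-(x t))]
    -- so d(t+1) ≤ d t * (1 - η exp(-x t))
    have hB : x (t+1) - y (t+1) ≤ (x t - y t) * (1 - η * Real.exp (-(x t))) := by
      rw [hx, hy]; nlinarith [Real.exp_pos (-(x t))]
    have hC : (1 : ℝ) - η * Real.exp (-(x t)) ≤ Real.exp (-(η * Real.exp (-(x t)))) := by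
      linarith [Real.add_one_le_exp (-(η * Real.exp (-(x t))))]
    have heq : x t - x (t+1) = -(η * Real.exp (-(x t))) := by rw [hx]; ring
    rw [heq]
    calc x (t+1) - y (t+1) ≤ (x t - y t) * (1 - η * Real.exp (-(x t))) := hB
      _ ≤ (x t - y t) * Real.exp (-(η * Real.exp (-(x t)))) :=
        mul_le_mul_of_nonneg_left hC (hd0 t)
  -- global bound: d T ≤ d 0 * exp (x 0 - x T)
  have hbound : ∀ T, x T - y T ≤ (x 0 - y 0) * Real.exp (x 0 - x T) := by
    intro T; induction T with
    | zero => simp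
    | succ n ih =>
      calc x (n+1) - y (n+1) ≤ (x n - y n) * Real.exp (x n - x (n+1)) := hstep n
        _ ≤ ((x 0 - y 0) * Real.exp (x 0 - x n)) * Real.exp (x n - x (n+1)) :=
          mul_le_mul_of_nonneg_right ih (Real.exp_pos _).le
        _ = (x 0 - y 0) * Real.exp (x 0 - x (n+1)) := by
          rw [mul_assoc, ← Real.exp_add]; ring_nf
  -- x is monotone and tends to atTop
  have hxmono : Monotone x := by
    apply monotone_nat_of_le_succ
    intro t; rw [hx]; nlinarith [Real.exp_pos (-(x t))]
  have hxtop : Tendsto x atTop atTop := by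
    rcases tendsto_of_monotone hxmono with h | ⟨l, hl⟩
    · exact h
    · exfalso
      have h1 : Tendsto (fun t => x (t+1)) atTop (nhds l) :=
        hl.comp (tendsto_add_atTop_nat 1)
      have h2 : Tendsto (fun t => x t + η * Real.exp (-(x t))) atTop
          (nhds (l + η * Real.exp (-l))) := by
        exact hl.add (tendsto_const_nhds.mul ((Real.continuous_exp.tendsto _).comp hl.neg))
      have h3 : Tendsto (fun t => x (t+1)) atTop (nhds (l + η * Real.exp (-l))) := by
        simpa only [hx] using h2
      have := tendsto_nhds_unique h1 h3
      nlinarith [Real.exp_pos (-l)]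
  -- squeeze
  have hgto : Tendsto (fun T => (x 0 - y 0) * Real.exp (x 0 - x T)) atTop (nhds 0) := by
    have h1 : Tendsto (fun T => x 0 - x T) atTop atBot :=
      tendsto_atBot_add_const_left _ _ (tendsto_neg_atBot_iff.mpr hxtop)
    have h2 : Tendsto (fun T => Real.exp (x 0 - x T)) atTop (nhds 0) :=
      Real.tendsto_exp_atBot.comp h1
    simpa using h2.const_mul (x 0 - y 0)
  exact squeeze_zero hd0 hbound hgto

/-- under the specialized update rules with `η ∈ (0, 1/2]`,
`w1⁰ > 0 > w2⁰` and zero initial biases, both `w1 + w2` and `b2 - b1`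
converge monotonically to `(w1⁰ + w2⁰)/2`. -/
theorem stmt_18 (η : ℝ) (hη : η ∈ Set.Ioc (0:ℝ) (1/2)) (w1 b1 w2 b2 : ℕ → ℝ)
    (h1 : ∀ t : ℕ, w1 (t+1) = w1 t + η/2 * Real.exp (-(w1 t) - b1 t))
    (h2 : ∀ t : ℕ, b1 (t+1) = b1 t + η/2 * Real.exp (-(w1 t) - b1 t))
    (h3 : ∀ t : ℕ, w2 (t+1) = w2 t - η/2 * Real.exp (w2 t - b2 t))
    (h4 : ∀ t : ℕ, b2 (t+1) = b2 t + η/2 * Real.exp (w2 t - b2 t))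
    (hw1 : 0 < w1 0) (hw2 : w2 0 < 0) (hb1 : b1 0 = 0) (hb2 : b2 0 = 0) :
    MonoConvTo (fun t => w1 t + w2 t) ((w1 0 + w2 0) / 2) ∧
    MonoConvTo (fun t => b2 t - b1 t) ((w1 0 + w2 0) / 2) := by
  obtain ⟨hη0, hη2⟩ := hη
  set x : ℕ → ℝ := fun t => w1 t + b1 t with hxdef
  set y : ℕ → ℝ := fun t => b2 t - w2 t with hydef
  have hx : ∀ t, x (t+1) = x t + η * Real.exp (-(x t)) := by
    intro t; simp only [hxdef, h1, h2]
    have : -(w1 t) - b1 t = -(w1 t + b1 t) := by ring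
    rw [this]; ring
  have hy : ∀ t, y (t+1) = y t + η * Real.exp (-(y t)) := by
    intro t; simp only [hydef, h3, h4]
    have : w2 t - b2 t = -(b2 t - w2 t) := by ring
    rw [this]; ring
  have hx0 : 0 < x 0 := by simp [hxdef, hb1, hw1]
  have hy0 : 0 < y 0 := by simp [hydef, hb2]; linarith
  -- invariants
  have hinv1 : ∀ t, w1 t - b1 t = w1 0 := by
    intro t; induction t with
    | zero => simp [hb1]
    | succ n ih => rw [h1, h2]; linarith
  have hinv2 : ∀ t, w2 t + b2 t = w2 0 := by
    intro t; induction t with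
    | zero => simp [hb2]
    | succ n ih => rw [h3, h4]; linarith
  set c : ℝ := (w1 0 + w2 0) / 2 with hcdef
  have hS1 : ∀ t, w1 t + w2 t = c + (x t - y t) / 2 := by
    intro t
    have e1 := hinv1 t; have e2 := hinv2 t
    simp only [hxdef, hydef, hcdef]; linarith
  have hS2 : ∀ t, b2 t - b1 t = c - (x t - y t) / 2 := by
    intro t
    have e1 := hinv1 t; have e2 := hinv2 t
    simp only [hxdef, hydef, hcdef]; linarith
  have hd00 : x 0 - y 0 = w1 0 + w2 0 := by simp [hxdef, hydef, hb1, hb2]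
  clear_value x y c
  -- get the package about d = x - y for both orderings
  have key : (∀ t, 0 ≤ x 0 - y 0 → (0 ≤ x t - y t ∧ x (t+1) - y (t+1) ≤ x t - y t)) ∧
      (∀ t, x 0 - y 0 ≤ 0 → (x t - y t ≤ 0 ∧ x t - y t ≤ x (t+1) - y (t+1))) ∧
      Tendsto (fun t => x t - y t) atTop (nhds 0) := by
    rcases le_total (y 0) (x 0) with hc | hc
    · obtain ⟨A, B, C⟩ := aux_core η hη0 hη2 x y hx hy hx0 hy0 hc
      refine ⟨fun t _ => ⟨A t, B t⟩, fun t h => ?_, C⟩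
      · have : x 0 - y 0 = 0 := le_antisymm h (by linarith [A 0])
        have hz : ∀ s, x s - y s = 0 := by
          intro s; induction s with
          | zero => exact this
          | succ n ih => have := B n; have := A (n+1); linarith
        rw [hz t, hz (t+1)]; exact ⟨le_refl 0, le_refl 0⟩
    · obtain ⟨A, B, C⟩ := aux_core η hη0 hη2 y x hy hx hy0 hx0 hc
      have C' : Tendsto (fun t => x t - y t) atTop (nhds 0) := by
        have := C.neg; simpa using this
      refine ⟨fun t h => ?_, fun t _ => ⟨by linarith [A t], by linarith [B t]⟩, C'⟩
      · have : x 0 - y 0 = 0 := le_antisymm (by linarith [A 0]) h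
        have hz : ∀ s, x s - y s = 0 := by
          intro s; induction s with
          | zero => exact this
          | succ n ih => have := B n; have := A (n+1); linarith
        rw [hz t, hz (t+1)]; exact ⟨le_refl 0, le_refl 0⟩
  obtain ⟨Kpos, Kneg, Klim⟩ := key
  constructor
  · refine ⟨?_, ?_, ?_⟩
    · have : Tendsto (fun t => c + (x t - y t) / 2) atTop (nhds (c + 0 / 2)) := by
        exact tendsto_const_nhds.add (Klim.div_const 2)
      simp only [hS1]
      simpa using this
    · intro h0 t
      have h0' : x 0 - y 0 ≤ 0 := by
        have h0b : w1 0 + w2 0 ≤ c := h0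
        linarith [hS1 0]
      have := Kneg t h0'
      constructor
      · simp only [hS1]; linarith [this.2]
      · simp only [hS1]; linarith [this.1, (Kneg (t+1) h0').1]
    · intro h0 t
      have h0' : 0 ≤ x 0 - y 0 := by
        have h0b : c ≤ w1 0 + w2 0 := h0
        linarith [hS1 0]
      have := Kpos t h0'
      constructor
      · simp only [hS1]; linarith [this.2]
      · simp only [hS1]; linarith [(Kpos (t+1) h0').1]
  · refine ⟨?_, ?_, ?_⟩
    · have : Tendsto (fun t => c - (x t - y t) / 2) atTop (nhds (c - 0 / 2)) := by
        exact tendsto_const_nhds.sub (Klim.div_const 2)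
      simp only [hS2]
      simpa using this
    · intro h0 t
      have h0' : 0 ≤ x 0 - y 0 := by
        have h0b : b2 0 - b1 0 ≤ c := h0
        linarith [hS2 0]
      have := Kpos t h0'
      constructor
      · simp only [hS2]; linarith [this.2]
      · simp only [hS2]; linarith [(Kpos (t+1) h0').1]
    · intro h0 t
      have h0' : x 0 - y 0 ≤ 0 := by
        have h0b : c ≤ b2 0 - b1 0 := h0
        linarith [hS2 0]
      have := Kneg t h0'
      constructor
      · simp only [hS2]; linarith [this.2]
      · simp only [hS2]; linarith [(Kneg (t+1) h0').1]
end

section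
/- Let η ∈ (0, 0.3] and let (w1^(t), b1^(t), w2^(t), b2^(t)) follow the specialized update rules, with initialization satisfying w2^(0) < 0 < w1^(0), w1^(0) + w2^(0) > 1, and b1^(0) = b2^(0) = 0. Set t0 = ⌊(w1^(0) + w2^(0)) / (2*η*exp((−w1^(0) + w2^(0))/2))⌋. Then for all t ≥ t0: b2^(t) − b1^(t) ≥ (w1^(0) + w2^(0))/11 − 1/10. -/
set_option maxHeartbeats 1000000

lemma expA (a : ℝ) (ha : 0 ≤ a) (ha2 : a ≤ 0.117) : Real.exp a ≤ 1 + 1.1 * a := by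
  have h2 : 1 - a/2 ≤ Real.exp (-(a/2)) := by
    have := Real.add_one_le_exp (-(a/2)); linarith
  have hpos : (0:ℝ) < 1 - a/2 := by linarith
  have key : Real.exp a * (1 - a/2)^2 ≤ 1 := by
    have h3 : (1 - a/2)^2 ≤ Real.exp (-(a/2)) ^ 2 := by
      apply pow_le_pow_left₀ (by linarith) h2
    have h4 : Real.exp a * Real.exp (-(a/2)) ^ 2 = 1 := by
      rw [sq, ← Real.exp_add, ← Real.exp_add,
        show a + (-(a/2) + -(a/2)) = 0 by ring, Real.exp_zero]
    calc Real.exp a * (1 - a/2)^2 ≤ Real.exp a * Real.exp (-(a/2)) ^ 2 := by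
          apply mul_le_mul_of_nonneg_left h3 (Real.exp_pos a).le
      _ = 1 := h4
  nlinarith [key, Real.exp_pos a, sq_nonneg a, mul_nonneg ha (sq_nonneg a)]

lemma quarticLower (y : ℝ) (hy : 0 ≤ y) : (1 + y/4)^4 ≤ Real.exp y := by
  have h1 : 1 + y/4 ≤ Real.exp (y/4) := by have := Real.add_one_le_exp (y/4); linarith
  have h2 : (1 + y/4)^4 ≤ Real.exp (y/4) ^ 4 := by
    apply pow_le_pow_left₀ (by linarith) h1
  have h3 : Real.exp (y/4) ^ 4 = Real.exp y := by
    rw [← Real.exp_nat_mul]; congr 1; push_cast; ring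
  linarith

lemma quarticUpper (x : ℝ) (hx : 0 ≤ x) (hx4 : x < 4) :
    Real.exp x * (1 - x/4)^4 ≤ 1 := by
  have h2 : 1 - x/4 ≤ Real.exp (-(x/4)) := by
    have := Real.add_one_le_exp (-(x/4)); linarith
  have h3 : (1 - x/4)^4 ≤ Real.exp (-(x/4)) ^ 4 :=
    pow_le_pow_left₀ (by linarith) h2 4
  have h4 : Real.exp x * Real.exp (-(x/4)) ^ 4 = 1 := by
    have h5 : Real.exp (-(x/4)) ^ 4 = Real.exp (-x) := by
      rw [← Real.exp_nat_mul]; congr 1; push_cast; ring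
    rw [h5, ← Real.exp_add, show x + -x = 0 by ring, Real.exp_zero]
  calc Real.exp x * (1 - x/4)^4 ≤ Real.exp x * Real.exp (-(x/4)) ^ 4 := by
        apply mul_le_mul_of_nonneg_left h3 (Real.exp_pos x).le
    _ = 1 := h4

lemma star (x : ℝ) (hx : 1/2 ≤ x) :
    Real.exp x + 1.1 * x ≤ Real.exp (18*x/11 + 1/5) * (0.7 * Real.exp (-x) + x) := by
  have hsplit : Real.exp (18*x/11 + 1/5) * Real.exp (-x) = Real.exp (7*x/11 + 1/5) := by
    rw [← Real.exp_add]; ring_nf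
  have hexp : Real.exp (18*x/11 + 1/5) * (0.7 * Real.exp (-x) + x)
      = 0.7 * Real.exp (7*x/11 + 1/5) + x * Real.exp (18*x/11 + 1/5) := by
    rw [mul_add, mul_comm (Real.exp (18*x/11 + 1/5)) (0.7 * Real.exp (-x)),
      mul_assoc, mul_comm (Real.exp (-x)), hsplit]; ring
  rw [hexp]
  rcases le_or_gt x 0.7 with hc | hc
  · -- polynomial regime
    have hU := quarticUpper x (by linarith) (by linarith)
    have hL1 := quarticLower (7*x/11 + 1/5) (by linarith)
    have hL2 := quarticLower (18*x/11 + 1/5) (by linarith)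
    have hb : (0:ℝ) < 1 - x/4 := by linarith
    have hq : (0:ℝ) < (1 - x/4)^4 := by positivity
    have hex : Real.exp x ≤ 1 / (1 - x/4)^4 := by
      rw [le_div_iff₀ hq]; exact hU
    have hs0 : (0:ℝ) ≤ x - 1/2 := by linarith
    have hs1 : (0:ℝ) ≤ 0.7 - x := by linarith
    have hpoly : 1 / (1 - x/4)^4 + 1.1 * x ≤
        0.7 * (1 + (7*x/11 + 1/5)/4)^4 + x * (1 + (18*x/11 + 1/5)/4)^4 := by
      rw [div_add' _ _ _ (ne_of_gt hq), div_le_iff₀ hq]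
      nlinarith [mul_nonneg (pow_nonneg hs0 1) hs1, mul_nonneg (pow_nonneg hs0 2) hs1,
        mul_nonneg (pow_nonneg hs0 3) hs1, mul_nonneg (pow_nonneg hs0 4) hs1,
        mul_nonneg (pow_nonneg hs0 5) hs1, mul_nonneg (pow_nonneg hs0 6) hs1,
        mul_nonneg (pow_nonneg hs0 7) hs1, mul_nonneg (pow_nonneg hs0 8) hs1,
        hs0, hs1, pow_nonneg hs0 9, pow_nonneg hs0 2, pow_nonneg hs0 3]
    have t1 : 0.7 * (1 + (7*x/11 + 1/5)/4)^4 ≤ 0.7 * Real.exp (7*x/11 + 1/5) := by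
      linarith
    have t2 : x * (1 + (18*x/11 + 1/5)/4)^4 ≤ x * Real.exp (18*x/11 + 1/5) := by
      apply mul_le_mul_of_nonneg_left hL2 (by linarith)
    linarith
  · -- exponential regime, x ≥ 0.7
    have he : (2.7182818283:ℝ) < Real.exp 1 := Real.exp_one_gt_d9
    have h18 : Real.exp (18*x/11 + 1/5) = Real.exp x * Real.exp (7*x/11 + 1/5) := by
      rw [← Real.exp_add]; ring_nf
    have hy1 : 7*x/11 + 1/5 + 1 ≤ Real.exp (7*x/11 + 1/5) := by
      have := Real.add_one_le_exp (7*x/11 + 1/5); linarith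
    have p1 : Real.exp x ≤ x * Real.exp (18*x/11 + 1/5) := by
      rw [h18]
      have hx1 : 1 ≤ x * Real.exp (7*x/11 + 1/5) := by
        have : x * (7*x/11 + 1/5 + 1) ≤ x * Real.exp (7*x/11 + 1/5) :=
          mul_le_mul_of_nonneg_left hy1 (by linarith)
        nlinarith
      nlinarith [Real.exp_pos x]
    have p2 : 1.1 * x ≤ 0.7 * Real.exp (7*x/11 + 1/5) := by
      have hsp : Real.exp (7*x/11 + 1/5) = Real.exp 1 * Real.exp (7*x/11 + 1/5 - 1) := by
        rw [← Real.exp_add]; ring_nf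
      have h5 : 7*x/11 + 1/5 ≤ Real.exp (7*x/11 + 1/5 - 1) := by
        have := Real.add_one_le_exp (7*x/11 + 1/5 - 1); linarith
      have h6 : Real.exp 1 * (7*x/11 + 1/5) ≤ Real.exp 1 * Real.exp (7*x/11 + 1/5 - 1) :=
        mul_le_mul_of_nonneg_left h5 (Real.exp_pos 1).le
      have h7 : (2.7182818283:ℝ) * (7*x/11 + 1/5) ≤ Real.exp 1 * Real.exp (7*x/11 + 1/5 - 1) :=
        le_trans (mul_le_mul_of_nonneg_right he.le (by linarith)) h6
      rw [hsp]; linarith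
    linarith

/-- under the specialized update rules with `η ∈ (0, 0.3]`,
`w2⁰ < 0 < w1⁰`, `w1⁰ + w2⁰ > 1` and zero initial biases, the bias gap
`b2 - b1` stays above `(w1⁰ + w2⁰)/11 - 1/10` from iteration
`t0 = ⌊(w1⁰ + w2⁰) / (2η exp((-w1⁰ + w2⁰)/2))⌋` onward. -/
theorem stmt_19 (η : ℝ) (hη : η ∈ Set.Ioc (0:ℝ) 0.3) (w1 b1 w2 b2 : ℕ → ℝ)
    (h1 : ∀ t : ℕ, w1 (t+1) = w1 t + η/2 * Real.exp (-(w1 t) - b1 t))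
    (h2 : ∀ t : ℕ, b1 (t+1) = b1 t + η/2 * Real.exp (-(w1 t) - b1 t))
    (h3 : ∀ t : ℕ, w2 (t+1) = w2 t - η/2 * Real.exp (w2 t - b2 t))
    (h4 : ∀ t : ℕ, b2 (t+1) = b2 t + η/2 * Real.exp (w2 t - b2 t))
    (hw2 : w2 0 < 0) (hw1 : 0 < w1 0) (hsum : 1 < w1 0 + w2 0)
    (hb1 : b1 0 = 0) (hb2 : b2 0 = 0) :
    ∀ t : ℕ, ⌊(w1 0 + w2 0) / (2 * η * Real.exp ((-(w1 0) + w2 0) / 2))⌋₊ ≤ t →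
      (w1 0 + w2 0) / 11 - 1/10 ≤ b2 t - b1 t := by
  obtain ⟨hη0, hη3⟩ := hη
  have hη3' : η ≤ 0.3 := by exact_mod_cast hη3
  -- abbreviations
  set u : ℕ → ℝ := fun t => w1 t + b1 t with hu_def
  set v : ℕ → ℝ := fun t => b2 t - w2 t with hv_def
  have hu : ∀ t : ℕ, u (t+1) = u t + η * Real.exp (-(u t)) := by
    intro t
    simp only [hu_def]
    rw [h1, h2, show -(w1 t) - b1 t = -(w1 t + b1 t) by ring]
    ring
  have hv : ∀ t : ℕ, v (t+1) = v t + η * Real.exp (-(v t)) := by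
    intro t
    simp only [hv_def]
    rw [h3, h4, show w2 t - b2 t = -(b2 t - w2 t) by ring]
    ring
  -- conserved quantities
  have hC1 : ∀ t : ℕ, w1 t - b1 t = w1 0 := by
    intro t
    induction t with
    | zero => rw [hb1]; ring
    | succ n ih => rw [h1, h2]; linarith
  have hC2 : ∀ t : ℕ, b2 t + w2 t = w2 0 := by
    intro t
    induction t with
    | zero => rw [hb2]; ring
    | succ n ih => rw [h3, h4]; linarith
  have hu0 : u 0 = w1 0 := by simp [hu_def, hb1]
  have hv0 : v 0 = -(w2 0) := by simp [hv_def, hb2]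
  -- u is nondecreasing
  have humono : ∀ t : ℕ, w1 0 ≤ u t := by
    intro t
    induction t with
    | zero => rw [hu0]
    | succ n ih =>
      rw [hu n]
      have := Real.exp_pos (-(u n))
      nlinarith
  have hw1big : 1 < w1 0 := by linarith
  have hexp1 : (2.7182818283:ℝ) < Real.exp 1 := Real.exp_one_gt_d9
  -- upper bound on exp (u t)
  have hEu : ∀ t : ℕ, Real.exp (u t) ≤ Real.exp (w1 0) + 1.1 * η * t := by
    intro t
    induction t with
    | zero => rw [hu0]; simp
    | succ n ih =>
      rw [hu n, Real.exp_add]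
      have ha0 : 0 ≤ η * Real.exp (-(u n)) := by positivity
      have haup : η * Real.exp (-(u n)) ≤ 0.117 := by
        have h5 : Real.exp (-(u n)) ≤ Real.exp (-1) := by
          apply Real.exp_le_exp.mpr
          have := humono n; linarith
        have h6 : Real.exp (-1) ≤ 0.39 := by
          rw [Real.exp_neg]
          rw [inv_le_comm₀ (Real.exp_pos 1) (by norm_num)]
          linarith
        have h7 : Real.exp (-(u n)) ≤ 0.39 := le_trans h5 h6
        nlinarith
      have hA := expA (η * Real.exp (-(u n))) ha0 haup
      have hprod : Real.exp (u n) * Real.exp (-(u n)) = 1 := by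
        rw [← Real.exp_add, add_neg_cancel, Real.exp_zero]
      have hstep : Real.exp (u n) * Real.exp (η * Real.exp (-(u n)))
          ≤ Real.exp (u n) + 1.1 * η := by
        have := mul_le_mul_of_nonneg_left hA (Real.exp_pos (u n)).le
        calc Real.exp (u n) * Real.exp (η * Real.exp (-(u n)))
            ≤ Real.exp (u n) * (1 + 1.1 * (η * Real.exp (-(u n)))) := this
          _ = Real.exp (u n) + 1.1 * η * (Real.exp (u n) * Real.exp (-(u n))) := by ring
          _ = Real.exp (u n) + 1.1 * η := by rw [hprod]; ring
      push_cast
      linarith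
  -- lower bound on exp (v t)
  have hEv : ∀ t : ℕ, Real.exp (-(w2 0)) + η * t ≤ Real.exp (v t) := by
    intro t
    induction t with
    | zero => rw [hv0]; simp
    | succ n ih =>
      rw [hv n, Real.exp_add]
      have hprod : Real.exp (v n) * Real.exp (-(v n)) = 1 := by
        rw [← Real.exp_add, add_neg_cancel, Real.exp_zero]
      have hlow : 1 + η * Real.exp (-(v n)) ≤ Real.exp (η * Real.exp (-(v n))) := by
        have := Real.add_one_le_exp (η * Real.exp (-(v n))); linarith
      have hstep : Real.exp (v n) + η ≤ Real.exp (v n) * Real.exp (η * Real.exp (-(v n))) := by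
        have := mul_le_mul_of_nonneg_left hlow (Real.exp_pos (v n)).le
        calc Real.exp (v n) + η
            = Real.exp (v n) * 1 + η * (Real.exp (v n) * Real.exp (-(v n))) := by
              rw [hprod]; ring
          _ = Real.exp (v n) * (1 + η * Real.exp (-(v n))) := by ring
          _ ≤ Real.exp (v n) * Real.exp (η * Real.exp (-(v n))) := this
      push_cast
      linarith
  -- main argument
  intro t ht
  set x : ℝ := (w1 0 + w2 0) / 2 with hx_def
  set m : ℝ := (w1 0 - w2 0) / 2 with hm_def
  have hxhalf : 1/2 < x := by rw [hx_def]; linarith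
  have hxm : x < m := by rw [hx_def, hm_def]; linarith
  have hw1x : w1 0 = m + x := by rw [hx_def, hm_def]; ring
  have hw2x : -(w2 0) = m - x := by rw [hx_def, hm_def]; ring
  set T : ℝ := (w1 0 + w2 0) / (2 * η * Real.exp ((-(w1 0) + w2 0) / 2)) with hT_def
  have hTval : η * T = x * Real.exp m := by
    rw [hT_def, hx_def, hm_def]
    rw [show (-(w1 0) + w2 0) / 2 = -((w1 0 - w2 0)/2) by ring, Real.exp_neg]
    have h8 := Real.exp_pos ((w1 0 - w2 0)/2)
    field_simp
  have htT : T - 1 < (t : ℝ) := by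
    have h9 : T - 1 < (⌊T⌋₊ : ℝ) := Nat.sub_one_lt_floor T
    have h10 : (⌊T⌋₊ : ℝ) ≤ (t : ℝ) := by exact_mod_cast ht
    linarith
  set A : ℝ := Real.exp (w1 0) with hA_def
  set B : ℝ := Real.exp (-(w2 0)) with hB_def
  have hApos := Real.exp_pos (w1 0)
  have hBpos := Real.exp_pos (-(w2 0))
  -- denominator lower bound at time T-1
  have hemx : (1:ℝ) ≤ Real.exp m * Real.exp (-x) := by
    rw [← Real.exp_add]
    apply Real.one_le_exp
    linarith
  have hDlow : Real.exp m * (0.7 * Real.exp (-x) + x) ≤ B + η * (T - 1) := by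
    have hBx : B = Real.exp m * Real.exp (-x) := by
      rw [hB_def, ← Real.exp_add, hw2x]; ring_nf
    have : η ≤ 0.3 * (Real.exp m * Real.exp (-x)) := by nlinarith
    rw [hBx]
    have hT1 : η * (T - 1) = x * Real.exp m - η := by rw [mul_sub, hTval]; ring
    rw [hT1]
    nlinarith
  have hDpos : (0:ℝ) < Real.exp m * (0.7 * Real.exp (-x) + x) := by
    have := Real.exp_pos m
    have := Real.exp_pos (-x)
    nlinarith
  have hDpos' : (0:ℝ) < B + η * (T - 1) := lt_of_lt_of_le hDpos hDlow
  -- numerator upper bound at time T-1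
  have hNup : A + 1.1 * η * (T - 1) ≤ Real.exp m * (Real.exp x + 1.1 * x) := by
    have hAx : A = Real.exp m * Real.exp x := by
      rw [hA_def, ← Real.exp_add, hw1x]
    rw [hAx]
    have h11 : 1.1 * η * (T - 1) ≤ 1.1 * (η * T) := by nlinarith
    rw [hTval] at h11
    nlinarith [Real.exp_pos m]
  -- ratio monotonicity (cross-multiplied form)
  have hAB : 1.1 * B ≤ A := by
    have hAB' : A = B * Real.exp (w1 0 + w2 0) := by
      rw [hA_def, hB_def, ← Real.exp_add]; ring_nf
    have h12 : (2:ℝ) ≤ Real.exp (w1 0 + w2 0) := by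
      have := Real.add_one_le_exp (w1 0 + w2 0); linarith
    nlinarith
  have hcross : (A + 1.1 * η * (t:ℝ)) * (B + η * (T - 1))
      ≤ (A + 1.1 * η * (T - 1)) * (B + η * (t:ℝ)) := by
    nlinarith [mul_nonneg (le_of_lt hη0) (le_of_lt (sub_pos.2 htT)),
      mul_le_mul_of_nonneg_right hAB (mul_nonneg (le_of_lt hη0) (le_of_lt (sub_pos.2 htT)))]
  -- assemble: exp (u t) * D ≤ N' * exp (v t) where D, N' as above
  have hEvpos : (0:ℝ) < B + η * (t:ℝ) := by positivity
  have key : Real.exp (u t) * (Real.exp m * (0.7 * Real.exp (-x) + x))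
      ≤ Real.exp m * (Real.exp x + 1.1 * x) * Real.exp (v t) := by
    have s1 : Real.exp (u t) * (Real.exp m * (0.7 * Real.exp (-x) + x))
        ≤ (A + 1.1 * η * (t:ℝ)) * (B + η * (T - 1)) := by
      have e1 : Real.exp (u t) ≤ A + 1.1 * η * (t:ℝ) := hEu t
      have := mul_le_mul e1 hDlow hDpos.le (by nlinarith [Real.exp_pos (u t)])
      linarith
    have s2 : (A + 1.1 * η * (T - 1)) * (B + η * (t:ℝ))
        ≤ Real.exp m * (Real.exp x + 1.1 * x) * (B + η * (t:ℝ)) :=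
      mul_le_mul_of_nonneg_right hNup hEvpos.le
    have s3 : Real.exp m * (Real.exp x + 1.1 * x) * (B + η * (t:ℝ))
        ≤ Real.exp m * (Real.exp x + 1.1 * x) * Real.exp (v t) := by
      apply mul_le_mul_of_nonneg_left (hEv t)
      have := Real.exp_pos m
      have := Real.exp_pos x
      nlinarith
    linarith
  -- apply the scalar inequality (star)
  have hstar := star x (le_of_lt hxhalf)
  have key2 : Real.exp (u t) * (Real.exp m * (0.7 * Real.exp (-x) + x))
      ≤ Real.exp (18*x/11 + 1/5) * (Real.exp m * (0.7 * Real.exp (-x) + x)) * Real.exp (v t) := by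
    have h13 : Real.exp m * (Real.exp x + 1.1 * x)
        ≤ Real.exp m * (Real.exp (18*x/11 + 1/5) * (0.7 * Real.exp (-x) + x)) :=
      mul_le_mul_of_nonneg_left hstar (Real.exp_pos m).le
    have h14 : Real.exp m * (Real.exp (18*x/11 + 1/5) * (0.7 * Real.exp (-x) + x)) * Real.exp (v t)
        = Real.exp (18*x/11 + 1/5) * (Real.exp m * (0.7 * Real.exp (-x) + x)) * Real.exp (v t) := by
      ring
    calc Real.exp (u t) * (Real.exp m * (0.7 * Real.exp (-x) + x))
        ≤ Real.exp m * (Real.exp x + 1.1 * x) * Real.exp (v t) := key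
      _ ≤ Real.exp m * (Real.exp (18*x/11 + 1/5) * (0.7 * Real.exp (-x) + x)) * Real.exp (v t) :=
          mul_le_mul_of_nonneg_right h13 (Real.exp_pos (v t)).le
      _ = _ := h14
  have key3 : Real.exp (u t) ≤ Real.exp (18*x/11 + 1/5) * Real.exp (v t) := by
    apply le_of_mul_le_mul_right _ hDpos
    calc Real.exp (u t) * (Real.exp m * (0.7 * Real.exp (-x) + x))
        ≤ Real.exp (18*x/11 + 1/5) * (Real.exp m * (0.7 * Real.exp (-x) + x)) * Real.exp (v t) := key2
      _ = Real.exp (18*x/11 + 1/5) * Real.exp (v t) * (Real.exp m * (0.7 * Real.exp (-x) + x)) := by ring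
  have key4 : u t ≤ v t + (18*x/11 + 1/5) := by
    have h15 : Real.exp (v t + (18*x/11 + 1/5)) = Real.exp (18*x/11 + 1/5) * Real.exp (v t) := by
      rw [Real.exp_add]; ring
    exact Real.exp_le_exp.mp (key3.trans_eq h15.symm)
  -- conclude
  have hb1t : b1 t = (u t - w1 0) / 2 := by
    have := hC1 t; simp only [hu_def]; linarith
  have hb2t : b2 t = (v t + w2 0) / 2 := by
    have := hC2 t; simp only [hv_def]; linarith
  rw [hb1t, hb2t]
  rw [hx_def] at key4
  linarith
end
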